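/- arXiv:2602.02302 — 4 statements merged into one kernel-verified Lean document; each statement's English description precedes it below -/
import Mathlib

section
/- Let Ω be a countably infinite set, let M be a topologically closed submonoid of Ω^Ω, and let G := {g ∈ M : g is a bijection and g⁻¹ ∈ M} (so that M is the endomorphism monoid and G the automorphism group of a relational structure on Ω). Assume G is oligomorphic and acts without algebraicity. Let U ⊆ Ω^n be M-invariant and let ∼ be an M-invariant equivalence relation on U; assume B := U/∼ is dense and the induced action of G on B is without algebraicity. Then the entanglement relation is preserved by every finite-to-one e ∈ M: if a ∈ Ω entangles the class u/∼ of u ∈ U, then e(a) entangles the class (e∘u)/∼. -/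
/-- The topology of pointwise convergence on functions `α → β`
(product topology with `β` discrete). -/
def FnTop (α β : Type*) : TopologicalSpace (α → β) :=
  @Pi.topologicalSpace α (fun _ => β) (fun _ => ⊥)

/-- The coordinatewise action of a permutation on tuples. -/
def tAct {Ω : Type*} (g : Equiv.Perm Ω) {n : ℕ} (u : Fin n → Ω) : Fin n → Ω :=
  fun i => g (u i)

/-- The action of a permutation on sets of tuples. -/
def sAct {Ω : Type*} (g : Equiv.Perm Ω) {n : ℕ} (c : Set (Fin n → Ω)) : Set (Fin n → Ω) :=
  tAct g '' c

/-- A set of permutations is oligomorphic if for every `n` its coordinatewise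
action on `n`-tuples has finitely many orbits. -/
def Oligo {Ω : Type*} (G : Set (Equiv.Perm Ω)) : Prop :=
  ∀ n : ℕ, Set.Finite {o : Set (Fin n → Ω) | ∃ t : Fin n → Ω, o = {s | ∃ g ∈ G, s = tAct g t}}

/-- `G` acts without algebraicity on `Ω`: if the orbit of `a` under the pointwise
stabiliser of a finite tuple `y` is finite, then `a` is an entry of `y`. -/
def NoAlg {Ω : Type*} (G : Set (Equiv.Perm Ω)) : Prop :=
  ∀ (m : ℕ) (y : Fin m → Ω) (a : Ω),
    Set.Finite {b : Ω | ∃ g ∈ G, (∀ i, g (y i) = y i) ∧ b = g a} → ∃ i, a = y i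

/-- `G` is topologically closed in the space of permutations with the topology of
pointwise convergence. -/
def TopClosedPerm {Ω : Type*} (G : Set (Equiv.Perm Ω)) : Prop :=
  @IsClosed (Ω → Ω) (FnTop Ω Ω) {f | ∃ g ∈ G, f = ⇑g}

/-- The `r`-equivalence class of a tuple `u ∈ U`. -/
def cls {Ω : Type*} {n : ℕ} (U : Set (Fin n → Ω))
    (r : (Fin n → Ω) → (Fin n → Ω) → Prop) (u : Fin n → Ω) : Set (Fin n → Ω) :=
  {v ∈ U | r u v}

/-- The quotient `B = U/∼`, realised as the set of equivalence classes. -/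
def classes {Ω : Type*} {n : ℕ} (U : Set (Fin n → Ω))
    (r : (Fin n → Ω) → (Fin n → Ω) → Prop) : Set (Set (Fin n → Ω)) :=
  {c | ∃ u ∈ U, c = cls U r u}

/-- `a` entangles the class `c` if `a` is an entry of every tuple in `c`. -/
def Entangles {Ω : Type*} {n : ℕ} (a : Ω) (c : Set (Fin n → Ω)) : Prop :=
  ∀ v ∈ c, ∃ i, v i = a

/-- `a` strongly entangles `c ∈ B` if it entangles `c` and no other element of `B`. -/
def StronglyEntangles {Ω : Type*} {n : ℕ} (B : Set (Set (Fin n → Ω))) (a : Ω)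
    (c : Set (Fin n → Ω)) : Prop :=
  Entangles a c ∧ ∀ c' ∈ B, Entangles a c' → c' = c

/-- `a` is algebraic over `c`: the orbit of `a` under the stabiliser `G_c` is finite. -/
def AlgebraicOver {Ω : Type*} {n : ℕ} (G : Set (Equiv.Perm Ω)) (a : Ω)
    (c : Set (Fin n → Ω)) : Prop :=
  Set.Finite {b : Ω | ∃ g ∈ G, sAct g c = c ∧ b = g a}

/-- `B` is dense: for every `a ∈ Ω` there are `c₁,…,c_k ∈ B` whose joint stabiliser
is contained in the stabiliser of `a`. -/
def DenseClasses {Ω : Type*} {n : ℕ} (G : Set (Equiv.Perm Ω))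
    (B : Set (Set (Fin n → Ω))) : Prop :=
  ∀ a : Ω, ∃ (k : ℕ) (cc : Fin k → Set (Fin n → Ω)),
    (∀ i, cc i ∈ B) ∧ ∀ g ∈ G, (∀ i, sAct g (cc i) = cc i) → g a = a

/-- The induced action of `G` on `B` is without algebraicity. -/
def NoAlgOn {Ω : Type*} {n : ℕ} (G : Set (Equiv.Perm Ω))
    (B : Set (Set (Fin n → Ω))) : Prop :=
  ∀ (m : ℕ) (cc : Fin m → Set (Fin n → Ω)) (c : Set (Fin n → Ω)),
    (∀ i, cc i ∈ B) → c ∈ B →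
    Set.Finite {c' | ∃ g ∈ G, (∀ i, sAct g (cc i) = cc i) ∧ c' = sAct g c} →
    ∃ i, c = cc i

/-- The topology of pointwise convergence on `Function.End Ω`. -/
def endTop (Ω : Type*) : TopologicalSpace (Function.End Ω) := FnTop Ω Ω

/-- The unit group of a submonoid `M` of `Ω^Ω`: bijective elements of `M`
whose inverse also belongs to `M`, viewed as permutations. -/
def unitSet {Ω : Type*} (M : Submonoid (Function.End Ω)) : Set (Equiv.Perm Ω) :=
  {g | (⇑g : Function.End Ω) ∈ M ∧ (⇑g.symm : Function.End Ω) ∈ M}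

/-- A function is finite-to-one if every point has finite preimage. -/
def FinToOne {Ω : Type*} (e : Ω → Ω) : Prop :=
  ∀ b : Ω, Set.Finite {x | e x = b}

/-!
Every class `c ∈ B` has exactly one entangler. By density and absence of algebraicity every
point entangles some class; absence of algebraicity on `B` then forces some entry of a tuple of
`c` to entangle `c` and no other class. Its stabiliser therefore stabilises `c`, so every other
entangler of `c` would have a finite orbit over it, which absence of algebraicity forbids.

Let `β` be the entangler of `(e ∘ u)/∼`. Every tuple of `u/∼` meets the finite fibre `e⁻¹(β)`.
Moving tuples of `u/∼` by automorphisms that fix another tuple of the class, one finds a single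
point of the fibre entangling `u/∼`; it must be `a`, so `e a = β`.
-/

open Set

section NoAlgebraicity

variable {Ω : Type*} {G : Subgroup (Equiv.Perm Ω)}

theorem NoAlg.mem_of_finite_orbit (hG : NoAlg (G : Set (Equiv.Perm Ω))) {S : Set Ω}
    (hS : S.Finite) {a : Ω} (horb : {b | ∃ g ∈ G, (∀ s ∈ S, g s = s) ∧ b = g a}.Finite) :
    a ∈ S := by
  obtain ⟨m, y, -, rfl⟩ := hS.fin_param
  obtain ⟨i, rfl⟩ := hG m y a (by simpa only [forall_mem_range, SetLike.mem_coe] using horb)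
  exact mem_range_self i

theorem NoAlg.exists_fix_and_move_off (hG : NoAlg (G : Set (Equiv.Perm Ω))) {W X F : Set Ω}
    (hW : W.Finite) (hX : X.Finite) (hF : F.Finite) :
    ∃ g ∈ G, (∀ w ∈ W, g w = w) ∧ ∀ x ∈ X \ W, g x ∉ F := by
  induction X, hX using Set.Finite.induction_on with
  | empty => exact ⟨1, G.one_mem, fun _ _ => rfl, by simp⟩
  | @insert a X haX hX ih =>
    obtain ⟨g, hg, hgW, hgX⟩ := ih
    by_cases haW : a ∈ W
    · refine ⟨g, hg, hgW, ?_⟩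
      rintro x ⟨rfl | hx, hxW⟩
      exacts [absurd haW hxW, hgX x ⟨hx, hxW⟩]
    have hS : (g '' (W ∪ X)).Finite := (hW.union hX).image g
    have hga : g a ∉ g '' (W ∪ X) := by
      rw [g.injective.mem_set_image]
      rintro (h | h)
      exacts [haW h, haX h]
    have horb : {b | ∃ h ∈ G, (∀ s ∈ g '' (W ∪ X), h s = s) ∧ b = h (g a)}.Infinite :=
      fun hfin => hga (hG.mem_of_finite_orbit hS hfin)
    obtain ⟨_, ⟨h, hh, hfix, rfl⟩, hbF⟩ := (horb.sdiff hF).nonempty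
    refine ⟨h * g, G.mul_mem hh hg, fun w hw => ?_, ?_⟩
    · rw [Equiv.Perm.mul_apply, hfix _ (mem_image_of_mem g (Or.inl hw)), hgW w hw]
    · rintro x ⟨rfl | hx, hxW⟩
      · exact hbF
      · rw [Equiv.Perm.mul_apply, hfix (g x) (mem_image_of_mem g (Or.inr hx))]
        exact hgX x ⟨hx, hxW⟩

end NoAlgebraicity

section Entanglement

variable {Ω : Type*} {n : ℕ}

theorem Entangles.sAct {a : Ω} {c : Set (Fin n → Ω)} (h : Entangles a c) (g : Equiv.Perm Ω) :
    Entangles (g a) (sAct g c) := by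
  rintro _ ⟨v, hv, rfl⟩
  obtain ⟨i, rfl⟩ := h v hv
  exact ⟨i, rfl⟩

theorem Set.Nonempty.finite_setOf_entangles {c : Set (Fin n → Ω)} (hc : c.Nonempty) :
    {a | Entangles a c}.Finite :=
  (finite_range hc.some).subset fun _ ha => ha _ hc.some_mem

end Entanglement

structure IsInvariantEquivOn {Ω : Type*} {n : ℕ} (G : Subgroup (Equiv.Perm Ω))
    (U : Set (Fin n → Ω)) (r : (Fin n → Ω) → (Fin n → Ω) → Prop) : Prop where
  refl : ∀ u ∈ U, r u u
  symm : ∀ u ∈ U, ∀ v ∈ U, r u v → r v u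
  trans : ∀ u ∈ U, ∀ v ∈ U, ∀ w ∈ U, r u v → r v w → r u w
  tAct_mem : ∀ g ∈ G, ∀ u ∈ U, tAct g u ∈ U
  tAct_rel : ∀ g ∈ G, ∀ u ∈ U, ∀ v ∈ U, r u v → r (tAct g u) (tAct g v)

namespace IsInvariantEquivOn

variable {Ω : Type*} {n : ℕ} {G : Subgroup (Equiv.Perm Ω)} {U : Set (Fin n → Ω)}
  {r : (Fin n → Ω) → (Fin n → Ω) → Prop} (hr : IsInvariantEquivOn G U r)
include hr

theorem mem_cls_self {u : Fin n → Ω} (hu : u ∈ U) : u ∈ cls U r u :=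
  ⟨hu, hr.refl u hu⟩

theorem nonempty_of_mem_classes {c : Set (Fin n → Ω)} (hc : c ∈ classes U r) : c.Nonempty := by
  obtain ⟨u, hu, rfl⟩ := hc
  exact ⟨u, hr.mem_cls_self hu⟩

theorem cls_eq_of_mem {u v : Fin n → Ω} (hu : u ∈ U) (hv : v ∈ cls U r u) :
    cls U r v = cls U r u := by
  ext w
  exact ⟨fun hw => ⟨hw.1, hr.trans u hu v hv.1 w hw.1 hv.2 hw.2⟩,
    fun hw => ⟨hw.1, hr.trans v hv.1 u hu w hw.1 (hr.symm u hu v hv.1 hv.2) hw.2⟩⟩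

theorem sAct_cls {g : Equiv.Perm Ω} (hg : g ∈ G) {u : Fin n → Ω} (hu : u ∈ U) :
    sAct g (cls U r u) = cls U r (tAct g u) := by
  have tAct_inv : ∀ v : Fin n → Ω, tAct g⁻¹ (tAct g v) = v := fun v =>
    funext fun i => g.symm_apply_apply _
  ext w
  constructor
  · rintro ⟨v, hv, rfl⟩
    exact ⟨hr.tAct_mem g hg v hv.1, hr.tAct_rel g hg u hu v hv.1 hv.2⟩
  · rintro ⟨hw, hrw⟩
    have hgu := hr.tAct_mem g hg u hu
    refine ⟨tAct g⁻¹ w, ⟨hr.tAct_mem _ (G.inv_mem hg) w hw, ?_⟩,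
      funext fun i => g.apply_symm_apply _⟩
    simpa only [tAct_inv] using hr.tAct_rel _ (G.inv_mem hg) _ hgu w hw hrw

theorem sAct_mem_classes {g : Equiv.Perm Ω} (hg : g ∈ G) {c : Set (Fin n → Ω)}
    (hc : c ∈ classes U r) : sAct g c ∈ classes U r := by
  obtain ⟨u, hu, rfl⟩ := hc
  exact ⟨tAct g u, hr.tAct_mem g hg u hu, hr.sAct_cls hg hu⟩

theorem sAct_eq_self_of_fix {c : Set (Fin n → Ω)} (hc : c ∈ classes U r) {w : Fin n → Ω}
    (hw : w ∈ c) {g : Equiv.Perm Ω} (hg : g ∈ G) (hfix : ∀ i, g (w i) = w i) : sAct g c = c := by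
  obtain ⟨u, hu, rfl⟩ := hc
  rw [← hr.cls_eq_of_mem hu hw, hr.sAct_cls hg hw.1]
  exact congrArg (cls U r) (funext hfix)

theorem exists_avoiding (hG : NoAlg (G : Set (Equiv.Perm Ω))) {c : Set (Fin n → Ω)}
    (hc : c ∈ classes U r) {Q : Set Ω} (hQ : Q.Finite)
    (havoid : ∀ q ∈ Q, ∃ v ∈ c, ∀ i, v i ≠ q) : ∃ v ∈ c, ∀ i, v i ∉ Q := by
  induction Q, hQ using Set.Finite.induction_on with
  | empty =>
    obtain ⟨v, hv⟩ := hr.nonempty_of_mem_classes hc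
    exact ⟨v, hv, fun _ => notMem_empty _⟩
  | @insert q Q _ hQ ih =>
    obtain ⟨v, hv, hvQ⟩ := ih fun p hp => havoid p (mem_insert_of_mem q hp)
    obtain ⟨w, hw, hwq⟩ := havoid q (mem_insert q Q)
    -- moving `v` by an element fixing `w ∈ c` keeps it in `c`
    obtain ⟨g, hg, hgw, hgv⟩ := hG.exists_fix_and_move_off (finite_range w) (finite_range v)
      (hQ.insert q)
    refine ⟨tAct g v, ?_, fun i => ?_⟩
    · rw [← hr.sAct_eq_self_of_fix hc hw hg fun i => hgw _ (mem_range_self i)]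
      exact mem_image_of_mem _ hv
    by_cases hi : v i ∈ range w
    · obtain ⟨j, hj⟩ := hi
      have hfix : tAct g v i = v i := hgw _ ⟨j, hj⟩
      rw [hfix]
      rintro (hq | hQi)
      exacts [hwq j (hj.trans hq), hvQ i hQi]
    · exact hgv _ ⟨mem_range_self i, hi⟩

theorem exists_entangles_of_forall_exists_mem (hG : NoAlg (G : Set (Equiv.Perm Ω)))
    {c : Set (Fin n → Ω)} (hc : c ∈ classes U r) {Q : Set Ω} (hQ : Q.Finite)
    (hmeet : ∀ v ∈ c, ∃ i, v i ∈ Q) : ∃ q ∈ Q, Entangles q c := by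
  by_contra! hnot
  obtain ⟨v, hv, hvQ⟩ := hr.exists_avoiding hG hc hQ fun q hq => by
    simpa [Entangles] using hnot q hq
  obtain ⟨i, hi⟩ := hmeet v hv
  exact hvQ i hi

theorem exists_entangles (hG : NoAlg (G : Set (Equiv.Perm Ω)))
    (hdense : DenseClasses (G : Set (Equiv.Perm Ω)) (classes U r)) (a : Ω) :
    ∃ c ∈ classes U r, Entangles a c := by
  obtain ⟨k, cc, hcc, hstab⟩ := hdense a
  by_contra! hnot
  have hwit : ∀ i, ∃ v ∈ cc i, ∀ j, v j ≠ a := fun i => by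
    simpa [Entangles] using hnot (cc i) (hcc i)
  choose v hv hva using hwit
  -- fixing all the witnesses `v i` stabilises every `cc i`, hence fixes `a`
  have horb : {b | ∃ g ∈ G, (∀ s ∈ ⋃ i, range (v i), g s = s) ∧ b = g a} ⊆ {a} := by
    rintro _ ⟨g, hg, hfix, rfl⟩
    refine hstab g hg fun i => hr.sAct_eq_self_of_fix (hcc i) (hv i) hg fun j => ?_
    exact hfix _ (mem_iUnion_of_mem i (mem_range_self j))
  obtain ⟨i, j, hj⟩ := mem_iUnion.1 <|
    hG.mem_of_finite_orbit (finite_iUnion fun i => finite_range (v i))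
      ((finite_singleton a).subset horb)
  exact hva i j hj

/-- Choose for each entry `u j` a class `X j` it entangles, different from `c` when possible.
The joint stabiliser of the `X j` moves `c` only among the classes of tuples of entanglers of the
`X j`, a finite set, so `c` is one of the `X j`. -/
theorem exists_stronglyEntangles (hG : NoAlg (G : Set (Equiv.Perm Ω)))
    (hdense : DenseClasses (G : Set (Equiv.Perm Ω)) (classes U r))
    (hB : NoAlgOn (G : Set (Equiv.Perm Ω)) (classes U r)) {c : Set (Fin n → Ω)}
    (hc : c ∈ classes U r) : ∃ z, StronglyEntangles (classes U r) z c := by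
  obtain ⟨u, hu, rfl⟩ := hc
  have hchoice : ∀ j, ∃ X ∈ classes U r, Entangles (u j) X ∧
      ((∃ X' ∈ classes U r, Entangles (u j) X' ∧ X' ≠ cls U r u) → X ≠ cls U r u) := by
    intro j
    by_cases hj : ∃ X' ∈ classes U r, Entangles (u j) X' ∧ X' ≠ cls U r u
    · obtain ⟨X', hX', hent, hne⟩ := hj
      exact ⟨X', hX', hent, fun _ => hne⟩
    · obtain ⟨X, hX, hent⟩ := hr.exists_entangles hG hdense (u j)
      exact ⟨X, hX, hent, fun h => absurd h hj⟩
  choose X hX hent hne using hchoice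
  have hfin : {c' | ∃ g ∈ G, (∀ j, sAct g (X j) = X j) ∧ c' = sAct g (cls U r u)}.Finite := by
    refine ((Set.Finite.pi fun j => (hr.nonempty_of_mem_classes (hX j)).finite_setOf_entangles
      ).image (cls U r)).subset ?_
    rintro _ ⟨g, hg, hfix, rfl⟩
    refine ⟨tAct g u, fun j _ => ?_, (hr.sAct_cls hg hu).symm⟩
    exact (hfix j ▸ (hent j).sAct g : Entangles (g (u j)) (X j))
  obtain ⟨j, hj⟩ := hB n X (cls U r u) hX ⟨u, hu, rfl⟩ hfin
  refine ⟨u j, hj ▸ hent j, fun c' hc' hent' => ?_⟩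
  by_contra hne'
  exact hne j ⟨c', hc', hent', hne'⟩ hj.symm

theorem eq_of_stronglyEntangles (hG : NoAlg (G : Set (Equiv.Perm Ω))) {c : Set (Fin n → Ω)}
    (hc : c ∈ classes U r) {z : Ω} (hz : StronglyEntangles (classes U r) z c) {a : Ω}
    (ha : Entangles a c) : a = z := by
  have horb : {b | ∃ g ∈ G, (∀ s ∈ ({z} : Set Ω), g s = s) ∧ b = g a} ⊆ {b | Entangles b c} := by
    rintro _ ⟨g, hg, hfix, rfl⟩
    have hgz : g z = z := hfix z rfl
    have hgc : sAct g c = c := hz.2 _ (hr.sAct_mem_classes hg hc) (hgz ▸ hz.1.sAct g)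
    exact hgc ▸ ha.sAct g
  exact hG.mem_of_finite_orbit (finite_singleton z)
    ((hr.nonempty_of_mem_classes hc).finite_setOf_entangles.subset horb)

theorem existsUnique_entangles (hG : NoAlg (G : Set (Equiv.Perm Ω)))
    (hdense : DenseClasses (G : Set (Equiv.Perm Ω)) (classes U r))
    (hB : NoAlgOn (G : Set (Equiv.Perm Ω)) (classes U r)) {c : Set (Fin n → Ω)}
    (hc : c ∈ classes U r) : ∃! z, Entangles z c := by
  obtain ⟨z, hz⟩ := hr.exists_stronglyEntangles hG hdense hB hc
  exact ⟨z, hz.1, fun a ha => hr.eq_of_stronglyEntangles hG hc hz ha⟩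

end IsInvariantEquivOn

def unitSubgroup {Ω : Type*} (M : Submonoid (Function.End Ω)) : Subgroup (Equiv.Perm Ω) where
  carrier := unitSet M
  one_mem' := ⟨M.one_mem, M.one_mem⟩
  mul_mem' hg hh := ⟨(M.mul_mem hg.1 hh.1 :), (M.mul_mem hh.2 hg.2 :)⟩
  inv_mem' hg := ⟨hg.2, hg.1⟩

theorem entanglement_preserved_by_finite_to_one_general
    {Ω : Type}
    (M : Submonoid (Function.End Ω))
    (hGnoalg : NoAlg (unitSet M))
    {n : ℕ} (U : Set (Fin n → Ω))
    (hUinv : ∀ e ∈ M, ∀ u ∈ U, (fun i => e (u i)) ∈ U)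
    (r : (Fin n → Ω) → (Fin n → Ω) → Prop)
    (hrefl : ∀ u ∈ U, r u u)
    (hsymm : ∀ u ∈ U, ∀ v ∈ U, r u v → r v u)
    (htrans : ∀ u ∈ U, ∀ v ∈ U, ∀ w ∈ U, r u v → r v w → r u w)
    (hrinv : ∀ e ∈ M, ∀ u ∈ U, ∀ v ∈ U, r u v → r (fun i => e (u i)) (fun i => e (v i)))
    (hdense : DenseClasses (unitSet M) (classes U r))
    (hBnoalg : NoAlgOn (unitSet M) (classes U r))
    :
    ∀ e ∈ M, FinToOne e → ∀ (a : Ω), ∀ u ∈ U,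
      Entangles a (cls U r u) → Entangles (e a) (cls U r (fun i => e (u i))) := by
  intro e he hfin a u hu ha
  have hr : IsInvariantEquivOn (unitSubgroup M) U r :=
    ⟨hrefl, hsymm, htrans, fun g hg => hUinv _ hg.1, fun g hg => hrinv _ hg.1⟩
  have heu : (fun i => e (u i)) ∈ U := hUinv e he u hu
  obtain ⟨β, hβ, -⟩ := hr.existsUnique_entangles hGnoalg hdense hBnoalg ⟨_, heu, rfl⟩
  obtain ⟨q, hqβ, hq⟩ := hr.exists_entangles_of_forall_exists_mem hGnoalg ⟨u, hu, rfl⟩ (hfin β)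
    fun v hv => hβ _ ⟨hUinv e he v hv.1, hrinv e he u hu v hv.1 hv.2⟩
  obtain ⟨z, -, hz⟩ := hr.existsUnique_entangles hGnoalg hdense hBnoalg ⟨u, hu, rfl⟩
  rwa [hz a ha, ← hz q hq, hqβ]

theorem entanglement_preserved_by_finite_to_one
    {Ω : Type} [Countable Ω] [Infinite Ω]
    (M : Submonoid (Function.End Ω))
    (hMclosed : @IsClosed (Function.End Ω) (endTop Ω) (M : Set (Function.End Ω)))
    (hGoligo : Oligo (unitSet M))
    (hGnoalg : NoAlg (unitSet M))
    {n : ℕ} (U : Set (Fin n → Ω))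
    (hUinv : ∀ e ∈ M, ∀ u ∈ U, (fun i => e (u i)) ∈ U)
    (r : (Fin n → Ω) → (Fin n → Ω) → Prop)
    (hrefl : ∀ u ∈ U, r u u)
    (hsymm : ∀ u ∈ U, ∀ v ∈ U, r u v → r v u)
    (htrans : ∀ u ∈ U, ∀ v ∈ U, ∀ w ∈ U, r u v → r v w → r u w)
    (hrinv : ∀ e ∈ M, ∀ u ∈ U, ∀ v ∈ U, r u v → r (fun i => e (u i)) (fun i => e (v i)))
    (hdense : DenseClasses (unitSet M) (classes U r))
    (hBnoalg : NoAlgOn (unitSet M) (classes U r))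
    :
    ∀ e ∈ M, FinToOne e → ∀ (a : Ω), ∀ u ∈ U,
      Entangles a (cls U r u) → Entangles (e a) (cls U r (fun i => e (u i))) :=
  entanglement_preserved_by_finite_to_one_general M hGnoalg U hUinv r hrefl hsymm htrans hrinv
    hdense hBnoalg
end

section
/- Let Ω and Ω′ be countably infinite sets and let M ⊆ Ω^Ω and N ⊆ Ω′^Ω′ be topologically closed submonoids whose unit groups G(M) := {g ∈ M : g bijective, g⁻¹ ∈ M} and G(N) := {g ∈ N : g bijective, g⁻¹ ∈ N} are oligomorphic and act without algebraicity (so that M and N are the endomorphism monoids of ω-categorical structures without algebraicity). Then every topological monoid isomorphism φ: M → N (a monoid isomorphism that is a homeomorphism with respect to the topologies of pointwise convergence) maps constant functions in M to constant functions in N. -/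
/-- The subspace topology of pointwise convergence on a submonoid of `Ω^Ω`. -/
def subTopM {Ω : Type*} (M : Submonoid (Function.End Ω)) : TopologicalSpace M :=
  TopologicalSpace.induced Subtype.val (endTop Ω)


/-- If `e'` is a left zero of `N` and `unitSet N` is oligomorphic, then `e'` has
finite range. -/
lemma aux_range_finite {Ω' : Type*} [Nonempty Ω'] (N : Submonoid (Function.End Ω'))
    (hol : Oligo (unitSet N)) (e' : N) (he' : ∀ n : N, e' * n = e') :
    (Set.range ((e' : Function.End Ω') : Ω' → Ω')).Finite := by
  classical
  have hval : ∀ g : Equiv.Perm Ω', g ∈ unitSet N →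
      ∀ x, (e' : Function.End Ω') (g x) = (e' : Function.End Ω') x := by
    intro g hg x
    exact congrFun (congrArg Subtype.val (he' ⟨(⇑g : Function.End Ω'), hg.1⟩)) x
  set u : Ω' → Set (Fin 1 → Ω') :=
    fun x => {s | ∃ g ∈ unitSet N, s = tAct g (fun _ => x)} with hu
  have hmem : ∀ x, u x ∈
      {o : Set (Fin 1 → Ω') | ∃ t : Fin 1 → Ω', o = {s | ∃ g ∈ unitSet N, s = tAct g t}} :=
    fun x => ⟨fun _ => x, rfl⟩
  have hone : (Equiv.refl Ω') ∈ unitSet N := by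
    constructor
    · exact N.one_mem
    · exact N.one_mem
  have hrefl : ∀ x, (fun _ => x : Fin 1 → Ω') ∈ u x := by
    intro x
    exact ⟨Equiv.refl Ω', hone, rfl⟩
  have key : ∀ x y, u x = u y → (e' : Function.End Ω') y = (e' : Function.End Ω') x := by
    intro x y h
    have hy : (fun _ => y : Fin 1 → Ω') ∈ u x := by rw [h]; exact hrefl y
    obtain ⟨g, hg, hs⟩ := hy
    have : y = g x := congrFun hs 0
    rw [this]
    exact hval g hg x
  have hfin := hol 1
  refine Set.Finite.subset (hfin.image
    (fun o => if h : ∃ x, o = u x then (e' : Function.End Ω') h.choose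
      else (e' : Function.End Ω') (Classical.arbitrary Ω'))) ?_
  rintro v ⟨x, rfl⟩
  refine ⟨u x, hmem x, ?_⟩
  have hx : ∃ z, u x = u z := ⟨x, rfl⟩
  beta_reduce
  rw [dif_pos hx]
  exact key _ _ hx.choose_spec

theorem topological_monoid_iso_preserves_constants
    {Ω Ω' : Type} [Countable Ω] [Infinite Ω] [Countable Ω'] [Infinite Ω']
    (M : Submonoid (Function.End Ω)) (N : Submonoid (Function.End Ω'))
    (hMclosed : @IsClosed (Function.End Ω) (endTop Ω) (M : Set (Function.End Ω)))
    (hNclosed : @IsClosed (Function.End Ω') (endTop Ω') (N : Set (Function.End Ω')))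
    (hMoligo : Oligo (unitSet M)) (hMnoalg : NoAlg (unitSet M))
    (hNoligo : Oligo (unitSet N)) (hNnoalg : NoAlg (unitSet N))
    (φ : M ≃* N)
    (hφcont : @Continuous M N (subTopM M) (subTopM N) ⇑φ)
    (hφsymmcont : @Continuous N M (subTopM N) (subTopM M) ⇑φ.symm) :
    ∀ e : M, (∃ c : Ω, ∀ x : Ω, (↑e : Function.End Ω) x = c) →
      ∃ c' : Ω', ∀ x : Ω', (↑(φ e) : Function.End Ω') x = c' := by
  classical
  intro e hce
  obtain ⟨c, hc⟩ := hce
  by_contra hcon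
  push_neg at hcon
  have hNE : Nonempty Ω' := inferInstance
  have hNEΩ : Nonempty Ω := inferInstance
  set E' : Function.End Ω' := ((φ e : N) : Function.End Ω') with hE'
  set p : Ω' := Classical.arbitrary Ω' with hp
  obtain ⟨q, hq⟩ := hcon (E' p)
  set b₁ : Ω' := E' p with hb₁
  set b₂ : Ω' := E' q with hb₂
  have hne : b₂ ≠ b₁ := hq
  -- `e` is a left zero of `M`
  have hK1 : ∀ f : M, e * f = e := by
    intro f
    apply Subtype.ext
    funext x
    show (e : Function.End Ω) ((f : Function.End Ω) x) = (e : Function.End Ω) x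
    rw [hc, hc]
  -- hence `φ e` is a left zero of `N`
  have he'mul : ∀ n : N, (φ e) * n = φ e := by
    intro n
    calc φ e * n = φ e * φ (φ.symm n) := by rw [MulEquiv.apply_symm_apply]
      _ = φ (e * φ.symm n) := (map_mul φ _ _).symm
      _ = φ e := by rw [hK1]
  have hVfin : (Set.range (E' : Ω' → Ω')).Finite :=
    aux_range_finite N hNoligo (φ e) he'mul
  have hb₁mem : b₁ ∈ Set.range (E' : Ω' → Ω') := ⟨p, rfl⟩
  have hb₂mem : b₂ ∈ Set.range (E' : Ω' → Ω') := ⟨q, rfl⟩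
  -- (A): if `f` fixes `c` then `φ f` fixes every value of `E'`
  have hA : ∀ f : M, (f : Function.End Ω) c = c →
      ∀ v ∈ Set.range (E' : Ω' → Ω'), ((φ f : N) : Function.End Ω') v = v := by
    intro f hf v hv
    obtain ⟨x, rfl⟩ := hv
    have h1 : f * e = e := by
      apply Subtype.ext
      funext z
      show (f : Function.End Ω) ((e : Function.End Ω) z) = (e : Function.End Ω) z
      rw [hc z]
      exact hf
    have h2 : φ f * φ e = φ e := by rw [← map_mul, h1]
    calc ((φ f : N) : Function.End Ω') (E' x) = ((φ f * φ e : N) : Function.End Ω') x := rfl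
      _ = E' x := by rw [h2]
  -- (B): if `φ f` fixes every value of `E'` then `f` fixes `c`
  have hB : ∀ f : M, (∀ v ∈ Set.range (E' : Ω' → Ω'), ((φ f : N) : Function.End Ω') v = v) →
      (f : Function.End Ω) c = c := by
    intro f hf
    have h2 : φ f * φ e = φ e := by
      apply Subtype.ext
      funext x
      show ((φ f : N) : Function.End Ω') (E' x) = E' x
      exact hf (E' x) ⟨x, rfl⟩
    have h1 : f * e = e := φ.injective (by rw [map_mul]; exact h2)
    have h3 := congrFun (congrArg Subtype.val h1) (Classical.arbitrary Ω)
    have h4 : (f : Function.End Ω) ((e : Function.End Ω) (Classical.arbitrary Ω)) =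
        (e : Function.End Ω) (Classical.arbitrary Ω) := h3
    rw [hc] at h4
    exact h4
  -- transfer: if no invertible `f ∈ M` has `φ f` fixing `T` pointwise while moving `c`,
  -- then every unit of `N` fixing `T` pointwise fixes all values of `E'`
  have htrans : ∀ T : Set Ω',
      (¬ ∃ f f' : M, f * f' = 1 ∧ f' * f = 1 ∧
        (∀ v ∈ T, ((φ f : N) : Function.End Ω') v = v) ∧ (f : Function.End Ω) c ≠ c) →
      ∀ g : Equiv.Perm Ω', g ∈ unitSet N → (∀ v ∈ T, g v = v) →
      ∀ v ∈ Set.range (E' : Ω' → Ω'), g v = v := by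
    intro T hT g hg hfixT
    push_neg at hT
    set n₁ : N := ⟨(⇑g : Function.End Ω'), hg.1⟩ with hn₁
    set n₂ : N := ⟨(⇑g.symm : Function.End Ω'), hg.2⟩ with hn₂
    have hn12 : n₁ * n₂ = 1 := by
      apply Subtype.ext
      funext x
      show g (g.symm x) = x
      exact g.apply_symm_apply x
    have hn21 : n₂ * n₁ = 1 := by
      apply Subtype.ext
      funext x
      show g.symm (g x) = x
      exact g.symm_apply_apply x
    have hφf : φ (φ.symm n₁) = n₁ := MulEquiv.apply_symm_apply φ n₁
    have hff' : (φ.symm n₁) * (φ.symm n₂) = 1 := by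
      rw [← map_mul, hn12, map_one]
    have hf'f : (φ.symm n₂) * (φ.symm n₁) = 1 := by
      rw [← map_mul, hn21, map_one]
    have hfixT' : ∀ v ∈ T, ((φ (φ.symm n₁) : N) : Function.End Ω') v = v := by
      intro v hv
      rw [hφf]
      exact hfixT v hv
    have hfc : ((φ.symm n₁ : M) : Function.End Ω) c = c := hT _ _ hff' hf'f hfixT'
    intro v hv
    have h5 := hA (φ.symm n₁) hfc v hv
    rw [hφf] at h5
    exact h5
  -- Claim 1: some invertible `f₁ ∈ M` has `φ f₁` fixing `b₁` but `f₁ c ≠ c`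
  have hcl1 : ∃ f f' : M, f * f' = 1 ∧ f' * f = 1 ∧
      (∀ v ∈ ({b₁} : Set Ω'), ((φ f : N) : Function.End Ω') v = v) ∧
      (f : Function.End Ω) c ≠ c := by
    by_contra hT
    have h6 := htrans {b₁} hT
    have hsub : {b : Ω' | ∃ g ∈ unitSet N, (∀ i, g (![b₁] i) = ![b₁] i) ∧ b = g b₂} ⊆ {b₂} := by
      rintro b ⟨g, hg, hfix, rfl⟩
      have hgb₁ : g b₁ = b₁ := by simpa using hfix 0
      have h7 := h6 g hg (by
        intro v hv
        rw [Set.mem_singleton_iff] at hv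
        rw [hv]
        exact hgb₁) b₂ hb₂mem
      simpa using h7
    obtain ⟨i, hi⟩ := hNnoalg 1 ![b₁] b₂ ((Set.finite_singleton b₂).subset hsub)
    apply hne
    simpa using hi
  obtain ⟨f₁, f₁', hf11, hf12, hfix1, hf1c⟩ := hcl1
  -- enumerate the remaining values
  set V'' : Set Ω' := Set.range (E' : Ω' → Ω') \ {b₁} with hV''
  have hV''fin : V''.Finite := hVfin.subset Set.diff_subset
  set l : List Ω' := hV''fin.toFinset.toList with hl
  have hmemV'' : ∀ z, z ∈ V'' ↔ ∃ i : Fin l.length, l.get i = z := by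
    intro z
    rw [← Set.Finite.mem_toFinset hV''fin, ← Finset.mem_toList, List.mem_iff_get]
  set y : Fin l.length → Ω' := fun i => l.get i with hy
  -- Claim 2: some invertible `f₂ ∈ M` has `φ f₂` fixing `V''` pointwise but `f₂ c ≠ c`
  have hcl2 : ∃ f f' : M, f * f' = 1 ∧ f' * f = 1 ∧
      (∀ v ∈ V'', ((φ f : N) : Function.End Ω') v = v) ∧
      (f : Function.End Ω) c ≠ c := by
    by_contra hT
    have h6 := htrans V'' hT
    have hsub : {b : Ω' | ∃ g ∈ unitSet N, (∀ i, g (y i) = y i) ∧ b = g b₁} ⊆ {b₁} := by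
      rintro b ⟨g, hg, hfix, rfl⟩
      have hgV : ∀ v ∈ V'', g v = v := by
        intro v hv
        obtain ⟨i, hi⟩ := (hmemV'' v).1 hv
        rw [← hi]
        exact hfix i
      exact h6 g hg hgV b₁ hb₁mem
    obtain ⟨i, hi⟩ := hNnoalg l.length y b₁ ((Set.finite_singleton b₁).subset hsub)
    have h8 : y i ∈ V'' := (hmemV'' (y i)).2 ⟨i, rfl⟩
    apply h8.2
    rw [Set.mem_singleton_iff, ← hi]
  obtain ⟨f₂, f₂', hf21, hf22, hfix2, hf2c⟩ := hcl2
  set a₁ : Ω := (f₁ : Function.End Ω) c with ha₁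
  set a₂ : Ω := (f₂ : Function.End Ω) c with ha₂
  -- the orbit of `c` under the stabiliser of `(a₁, a₂)` is trivial
  have horb : {b : Ω | ∃ g ∈ unitSet M, (∀ i, g (![a₁, a₂] i) = ![a₁, a₂] i) ∧ b = g c} ⊆
      {c} := by
    rintro b ⟨g, hg, hfix, rfl⟩
    have hga₁ : g a₁ = a₁ := by simpa using hfix 0
    have hga₂ : g a₂ = a₂ := by simpa using hfix 1
    set mg : M := ⟨(⇑g : Function.End Ω), hg.1⟩ with hmg
    have hfixall : ∀ v ∈ Set.range (E' : Ω' → Ω'), ((φ mg : N) : Function.End Ω') v = v := by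
      intro v hv
      -- generic conjugation step
      have hstep : ∀ f f' : M, f * f' = 1 → f' * f = 1 → (f : Function.End Ω) c ∈ ({a₁, a₂} : Set Ω) →
          ((φ f : N) : Function.End Ω') v = v → ((φ mg : N) : Function.End Ω') v = v := by
        intro f f' hffp hfpf hfc hfv
        have hgfc : g ((f : Function.End Ω) c) = (f : Function.End Ω) c := by
          rcases hfc with h | h
          · rw [h]; exact hga₁
          · rw [Set.mem_singleton_iff] at h
            rw [h]; exact hga₂
        have hw : ((f' * mg * f : M) : Function.End Ω) c = c := by
          show (f' : Function.End Ω) ((mg : Function.End Ω) ((f : Function.End Ω) c)) = c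
          have : (mg : Function.End Ω) ((f : Function.End Ω) c) = (f : Function.End Ω) c := hgfc
          rw [this]
          show ((f' * f : M) : Function.End Ω) c = c
          rw [hfpf]
          rfl
        have hwfix := hA _ hw v hv
        have hφf' : ((φ f' : N) : Function.End Ω') v = v := by
          calc ((φ f' : N) : Function.End Ω') v
              = ((φ f' : N) : Function.End Ω') (((φ f : N) : Function.End Ω') v) := by rw [hfv]
            _ = ((φ f' * φ f : N) : Function.End Ω') v := rfl
            _ = ((φ (f' * f) : N) : Function.End Ω') v := by rw [map_mul]
            _ = ((φ 1 : N) : Function.End Ω') v := by rw [hfpf]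
            _ = ((1 : N) : Function.End Ω') v := by rw [map_one]
            _ = v := rfl
        have hdec : mg = f * (f' * mg * f) * f' := by
          have h9 : f * (f' * mg * f) * f' = (f * f') * mg * (f * f') := by
            simp only [mul_assoc]
          rw [h9, hffp, one_mul, mul_one]
        calc ((φ mg : N) : Function.End Ω') v
            = ((φ (f * (f' * mg * f) * f') : N) : Function.End Ω') v := by rw [← hdec]
          _ = ((φ f * φ (f' * mg * f) * φ f' : N) : Function.End Ω') v := by
              rw [map_mul, map_mul]
          _ = ((φ f : N) : Function.End Ω')
              (((φ (f' * mg * f) : N) : Function.End Ω') (((φ f' : N) : Function.End Ω') v)) := rfl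
          _ = ((φ f : N) : Function.End Ω')
              (((φ (f' * mg * f) : N) : Function.End Ω') v) := by rw [hφf']
          _ = ((φ f : N) : Function.End Ω') v := by rw [hwfix]
          _ = v := hfv
      by_cases hv1 : v = b₁
      · refine hstep f₁ f₁' hf11 hf12 (by left; rfl) ?_
        rw [hv1]
        exact hfix1 b₁ rfl
      · refine hstep f₂ f₂' hf21 hf22 (by right; rfl) ?_
        exact hfix2 v ⟨hv, hv1⟩
    have := hB mg hfixall
    exact this
  obtain ⟨i, hi⟩ := hMnoalg 2 ![a₁, a₂] c ((Set.finite_singleton c).subset horb)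
  have hi2 : c = a₁ ∨ c = a₂ := by
    fin_cases i
    · left; simpa using hi
    · right; simpa using hi
  rcases hi2 with h | h
  · exact hf1c h.symm
  · exact hf2c h.symm
end

section
/- Fix a countable relational language L with relation symbols R_i of arity a_i (i ∈ ℕ), and let X := ∏_{i∈ℕ} Bool^{(Fin a_i → ℕ)} be the Polish space of L-structures with domain ℕ (product topology, Bool discrete), equipped with its Borel σ-algebra. Then there exists a Borel-measurable function f: X → ℝ such that for all ω-categorical x, y ∈ X: x and y are pp-bi-definable (i.e., there exists a bijection θ: ℕ → ℕ with Pol(y) = {θ∘h∘(θ⁻¹)^k : h ∈ Pol(x) of arity k, k ≥ 1}) if and only if f(x) = f(y). In other words, pp-bi-definability is smooth on the class of ω-categorical structures. -/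
/-- Codes for structures on `ℕ` in the countable relational language whose `i`-th
relation symbol has arity `a i`. -/
abbrev Codes (a : ℕ → ℕ) := ∀ i : ℕ, (Fin (a i) → ℕ) → Bool

/-- The product topology on the space of codes (`Bool` discrete), turning it into
a Polish space. -/
def XTop (a : ℕ → ℕ) : TopologicalSpace (Codes a) :=
  @Pi.topologicalSpace _ _ (fun _ => @Pi.topologicalSpace _ _ (fun _ => ⊥))

/-- The automorphisms of the structure coded by `x`: permutations of `ℕ`
preserving each relation and its complement. -/
def AutX {a : ℕ → ℕ} (x : Codes a) : Set (Equiv.Perm ℕ) :=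
  {g | ∀ (i : ℕ) (t : Fin (a i) → ℕ), x i (fun j => g (t j)) = x i t}

/-- The structure coded by `x` is ω-categorical. -/
def OmegaCatX {a : ℕ → ℕ} (x : Codes a) : Prop := Oligo (AutX x)

/-- The `k`-ary polymorphisms of the structure coded by `x`. -/
def PolX {a : ℕ → ℕ} (x : Codes a) (k : ℕ) : Set ((Fin k → ℕ) → ℕ) :=
  {h | ∀ (i : ℕ) (ts : Fin k → Fin (a i) → ℕ),
    (∀ j, x i (ts j) = true) → x i (fun m => h (fun j => ts j m)) = true}

/-- `x` and `y` are pp-bi-definable: some bijection of `ℕ` conjugates the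
polymorphism clone of `x` onto that of `y`. -/
def PPBiDef {a : ℕ → ℕ} (x y : Codes a) : Prop :=
  ∃ θ : Equiv.Perm ℕ, ∀ k : ℕ, 1 ≤ k →
    PolX y k = (fun h : (Fin k → ℕ) → ℕ => fun v => θ (h (fun j => θ.symm (v j)))) '' PolX x k

/-!
For an ω-categorical structure, a finite partial operation extends to a polymorphism as soon as it
survives every finite number of rounds of the extension game (argument proposed, value answered):
by oligomorphicity, a decreasing sequence of nonempty sets of answers that are invariant under the
stabiliser of finitely many points has a common element. So whether a partial operation on the
entries of a tuple extends to a polymorphism is recorded by the hereditarily finite *profiles* of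
the tuple: the level-`0` profile of `u` is its equality pattern, and the level-`k + 1` profile
consists of the level-`k` profile, the `(k + 1)`-ary partial operations on the entries of `u` that
extend to polymorphisms, and the set of level-`k` profiles of the one-point extensions of `u`.

A bijection conjugating the polymorphism clones preserves profiles. Conversely, if the empty tuple
has the same profiles in `x` and in `y`, a back-and-forth argument (using oligomorphicity once more
to pass from "agree up to every level" to "agree at all levels") enumerates `ℕ` twice with
equal profiles on all initial segments; the induced bijection conjugates the clones, because any
finitely many values of a polymorphism live on some initial segment. Each profile depends on the
structure through countably many Boolean conditions, so the profiles of the empty tuple form a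
Borel complete invariant with values in `ℕ → ℕ`, and `ℕ → ℕ` embeds into `ℝ`.
-/

@[simp]
theorem tAct_apply {Ω : Type*} (g : Equiv.Perm Ω) {n : ℕ} (u : Fin n → Ω) (i : Fin n) :
    tAct g u i = g (u i) :=
  rfl

@[simp]
theorem tAct_symm_tAct {Ω : Type*} (g : Equiv.Perm Ω) {n : ℕ} (u : Fin n → Ω) :
    tAct g.symm (tAct g u) = u :=
  funext fun i => g.symm_apply_apply (u i)

@[simp]
theorem tAct_tAct_symm {Ω : Type*} (g : Equiv.Perm Ω) {n : ℕ} (u : Fin n → Ω) :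
    tAct g (tAct g.symm u) = u :=
  funext fun i => g.apply_symm_apply (u i)

theorem Oligo.iInter_nonempty {Ω : Type*} {G : Set (Equiv.Perm Ω)} (hG : Oligo G) (hG1 : 1 ∈ G)
    {m : ℕ} (y : Fin m → Ω) {B : ℕ → Set Ω} (hB : Antitone B) (hne : ∀ s, (B s).Nonempty)
    (hinv : ∀ s, ∀ g ∈ G, (∀ i, g (y i) = y i) → ∀ b ∈ B s, g b ∈ B s) :
    (⋂ s, B s).Nonempty := by
  choose v hv using hne
  let orbit (b : Ω) : Set (Fin (m + 1) → Ω) := {w | ∃ g ∈ G, w = tAct g (Fin.snoc y b)}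
  have : Finite (Set.range orbit) :=
    ((hG (m + 1)).subset (Set.range_subset_iff.2 fun b => ⟨_, rfl⟩)).to_subtype
  -- infinitely many of the points `v s` lie in one orbit of the stabiliser of `y`
  obtain ⟨o, ho⟩ :=
    Finite.exists_infinite_fiber fun s => (⟨orbit (v s), v s, rfl⟩ : Set.range orbit)
  replace ho := Set.infinite_coe_iff.1 ho
  obtain ⟨s₀, hs₀⟩ := ho.nonempty
  refine ⟨v s₀, Set.mem_iInter.2 fun s' => ?_⟩
  obtain ⟨s, hs, hlt⟩ := ho.exists_gt s'
  have hmem : Fin.snoc y (v s₀) ∈ orbit (v s) := by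
    rw [show orbit (v s) = orbit (v s₀) from congrArg Subtype.val (hs.trans hs₀.symm)]
    exact ⟨1, hG1, rfl⟩
  obtain ⟨g, hg, hgy⟩ := hmem
  have hfix (i : Fin m) : g (y i) = y i := by
    simpa using (congrFun hgy i.castSucc).symm
  have hval : g (v s) = v s₀ := by simpa using (congrFun hgy (Fin.last m)).symm
  exact hB hlt.le (hval ▸ hinv s g hg hfix _ (hv s))

theorem exists_seq_of_forall_snoc {α : Type*} (P : ∀ n, (Fin n → α) → Prop)
    (h0 : P 0 Fin.elim0) (hP : ∀ n u, P n u → ∃ b, P (n + 1) (Fin.snoc u b)) :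
    ∃ w : ℕ → α, ∀ n, P n fun i => w i := by
  have : Nonempty α := (hP 0 _ h0).nonempty.map fun b => b
  choose! f hf using hP
  let T (n : ℕ) : Fin n → α :=
    Nat.rec (motive := fun n => Fin n → α) Fin.elim0 (fun n u => Fin.snoc u (f n u)) n
  have hT (n : ℕ) : P n (T n) := Nat.rec h0 (fun n ih => hf n _ ih) n
  refine ⟨fun m => T (m + 1) (Fin.last m), fun n => ?_⟩
  suffices (fun i : Fin n => T (i + 1) (Fin.last i)) = T n from this ▸ hT n
  induction n with
  | zero => exact funext fun i => i.elim0
  | succ n ih =>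
    funext i
    induction i using Fin.lastCases with
    | last => rfl
    | cast i =>
      change _ = (Fin.snoc (T n) _ : Fin (n + 1) → α) i.castSucc
      rw [Fin.snoc_castSucc]
      exact congrFun ih i

theorem exists_perm_of_backAndForth (R : ∀ n, (Fin n → ℕ) → (Fin n → ℕ) → Prop)
    (h0 : R 0 Fin.elim0 Fin.elim0)
    (forth : ∀ n u v, R n u v → ∀ b, ∃ c, R (n + 1) (Fin.snoc u b) (Fin.snoc v c))
    (back : ∀ n u v, R n u v → ∀ c, ∃ b, R (n + 1) (Fin.snoc u b) (Fin.snoc v c))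
    (eq_iff : ∀ n u v, R n u v → ∀ i j, u i = u j ↔ v i = v j) :
    ∃ (θ : Equiv.Perm ℕ) (A : ℕ → ℕ), Function.Surjective A ∧
      ∀ n, R n (fun i => A i) (fun i => θ (A i)) := by
  -- Step `2m` puts `m` on the left, step `2m + 1` puts `m` on the right.
  let demand (i : ℕ) (z : ℕ × ℕ) : Prop := if Even i then z.1 = i / 2 else z.2 = i / 2
  obtain ⟨w, hw⟩ := exists_seq_of_forall_snoc
    (fun n (w : Fin n → ℕ × ℕ) => R n (Prod.fst ∘ w) (Prod.snd ∘ w) ∧ ∀ i : Fin n, demand i (w i))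
    ⟨by convert h0, fun i => i.elim0⟩ (by
      rintro n w ⟨hR, hd⟩
      have hd' (z : ℕ × ℕ) (hz : demand n z) :
          ∀ i : Fin (n + 1), demand i ((Fin.snoc w z : Fin (n + 1) → ℕ × ℕ) i) :=
        Fin.forall_fin_succ'.2 ⟨fun i => by simpa using hd i, by simpa using hz⟩
      by_cases hn : Even n
      · obtain ⟨c, hc⟩ := forth n _ _ hR (n / 2)
        exact ⟨(n / 2, c), by simpa [Fin.comp_snoc] using hc, hd' _ (by simp [demand, hn])⟩
      · obtain ⟨b, hb⟩ := back n _ _ hR (n / 2)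
        exact ⟨(b, n / 2), by simpa [Fin.comp_snoc] using hb, hd' _ (by simp [demand, hn])⟩)
  let A (m : ℕ) : ℕ := (w m).1
  let B (m : ℕ) : ℕ := (w m).2
  have hA (m : ℕ) : A (2 * m) = m := by
    simpa [demand] using (hw (2 * m + 1)).2 ⟨2 * m, by omega⟩
  have hB (m : ℕ) : B (2 * m + 1) = m := by
    have h := (hw (2 * m + 2)).2 ⟨2 * m + 1, by omega⟩
    simp only [demand, Nat.not_even_two_mul_add_one, if_false] at h
    change (w (2 * m + 1)).2 = m
    omega
  have hAB (i j : ℕ) : A i = A j ↔ B i = B j :=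
    eq_iff _ _ _ (hw (max i j + 1)).1 ⟨i, by omega⟩ ⟨j, by omega⟩
  let θ : Equiv.Perm ℕ :=
    { toFun := fun z => B (2 * z)
      invFun := fun z => A (2 * z + 1)
      left_inv := fun z => by simpa [hA, hB] using (hAB (2 * B (2 * z) + 1) (2 * z)).2
      right_inv := fun z => by simpa [hA, hB] using (hAB (2 * A (2 * z + 1)) (2 * z + 1)).1 }
  have hθ (i : ℕ) : θ (A i) = B i := (hAB (2 * A i) i).1 (hA _)
  refine ⟨θ, A, fun m => ⟨2 * m, hA m⟩, fun n => ?_⟩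
  rw [show (fun i : Fin n => θ (A i)) = fun i : Fin n => B i from funext fun i => hθ i]
  exact (hw n).1

theorem Function.Surjective.exists_fin_lift {α ι : Type*} [Finite ι] {A : ℕ → α}
    (hA : Function.Surjective A) (z : ι → α) : ∃ (M : ℕ) (σ : ι → Fin M), ∀ i, A (σ i) = z i := by
  obtain ⟨M, hM⟩ := Finite.exists_le fun i => Function.surjInv hA (z i)
  exact ⟨M + 1, fun i => ⟨_, Nat.lt_succ_of_le (hM i)⟩, fun i => Function.surjInv_eq hA _⟩

theorem measurable_filter_univ_eq {X T : Type*} [MeasurableSpace X] [Fintype T]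
    {P : X → T → Prop} [∀ x, DecidablePred (P x)] (hP : ∀ t, Measurable fun x => P x t)
    (S : Finset T) : Measurable fun x => Finset.univ.filter (P x) = S := by
  simp_rw [Finset.ext_iff, Finset.mem_filter, Finset.mem_univ, true_and]
  exact Measurable.forall fun t => (hP t).iff measurable_const

namespace Codes

variable {a : ℕ → ℕ} {x y : Codes a}

theorem one_mem_AutX (x : Codes a) : 1 ∈ AutX x := fun _ _ => rfl

theorem symm_mem_AutX {g : Equiv.Perm ℕ} (hg : g ∈ AutX x) : g.symm ∈ AutX x := fun i t => by
  simpa using (hg i fun j => g.symm (t j)).symm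

def pairAct (g : Equiv.Perm ℕ) {j : ℕ} (e : (Fin j → ℕ) × ℕ) : (Fin j → ℕ) × ℕ :=
  (tAct g e.1, g e.2)

@[simp]
theorem pairAct_symm_pairAct (g : Equiv.Perm ℕ) {j : ℕ} (e : (Fin j → ℕ) × ℕ) :
    pairAct g.symm (pairAct g e) = e := by
  simp [pairAct]

@[simp]
theorem pairAct_pairAct_symm (g : Equiv.Perm ℕ) {j : ℕ} (e : (Fin j → ℕ) × ℕ) :
    pairAct g (pairAct g.symm e) = e := by
  simp [pairAct]

theorem mem_map_pairAct {g : Equiv.Perm ℕ} {j : ℕ} {p : List ((Fin j → ℕ) × ℕ)}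
    {e : (Fin j → ℕ) × ℕ} : e ∈ p.map (pairAct g) ↔ pairAct g.symm e ∈ p := by
  constructor
  · intro h
    obtain ⟨e', he', rfl⟩ := List.mem_map.1 h
    simpa using he'
  · intro h
    simpa only [pairAct_pairAct_symm] using List.mem_map_of_mem (f := pairAct g) h

/-- Finite partial `j`-ary operations are lists of (argument, value) pairs. -/
def IsPartialPol (x : Codes a) (j : ℕ) (p : List ((Fin j → ℕ) × ℕ)) : Prop :=
  (∀ q v v', (q, v) ∈ p → (q, v') ∈ p → v = v') ∧
    ∀ (i : ℕ) (ts : Fin j → Fin (a i) → ℕ) (vs : Fin (a i) → ℕ),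
      (∀ r, x i (ts r) = true) → (∀ m, (fun r => ts r m, vs m) ∈ p) → x i vs = true

/-- `IsExtendable x j s p`: in the game of `s` rounds where one player proposes an argument and
the other answers with a value for it, the answering player can keep `p` a partial polymorphism. -/
def IsExtendable (x : Codes a) (j : ℕ) : ℕ → List ((Fin j → ℕ) × ℕ) → Prop
  | 0, p => IsPartialPol x j p
  | s + 1, p => ∀ q, ∃ v, IsExtendable x j s ((q, v) :: p)

def IsFullyExtendable (x : Codes a) (j : ℕ) (p : List ((Fin j → ℕ) × ℕ)) : Prop :=
  ∀ s, IsExtendable x j s p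

section Extendable

variable {j : ℕ}

theorem IsPartialPol.mono {p p' : List ((Fin j → ℕ) × ℕ)} (hsub : p ⊆ p')
    (h : IsPartialPol x j p') : IsPartialPol x j p :=
  ⟨fun q v v' h₁ h₂ => h.1 q v v' (hsub h₁) (hsub h₂),
    fun i ts vs hts hvs => h.2 i ts vs hts fun m => hsub (hvs m)⟩

theorem IsExtendable.mono : ∀ {s : ℕ} {p p' : List ((Fin j → ℕ) × ℕ)}, p ⊆ p' →
    IsExtendable x j s p' → IsExtendable x j s p
  | 0, _, _, hsub, h => IsPartialPol.mono hsub h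
  | _ + 1, _, _, hsub, h => fun q =>
    (h q).imp fun _ hv => hv.mono (List.cons_subset_cons _ hsub)

theorem IsExtendable.of_succ {s : ℕ} {p : List ((Fin j → ℕ) × ℕ)}
    (h : IsExtendable x j (s + 1) p) : IsExtendable x j s p :=
  let ⟨_, hv⟩ := h fun _ => 0
  hv.mono (List.subset_cons_self _ _)

theorem IsFullyExtendable.mono {p p' : List ((Fin j → ℕ) × ℕ)} (hsub : p ⊆ p')
    (h : IsFullyExtendable x j p') : IsFullyExtendable x j p :=
  fun s => (h s).mono hsub

theorem IsPartialPol.map {g : Equiv.Perm ℕ} (hg : g ∈ AutX x) {p : List ((Fin j → ℕ) × ℕ)}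
    (h : IsPartialPol x j p) : IsPartialPol x j (p.map (pairAct g)) := by
  refine ⟨fun q v v' h₁ h₂ => ?_, fun i ts vs hts hvs => ?_⟩
  · rw [mem_map_pairAct] at h₁ h₂
    exact g.symm.injective (h.1 _ _ _ h₁ h₂)
  · simp only [mem_map_pairAct] at hvs
    exact (symm_mem_AutX hg i vs).symm.trans <| h.2 i (fun r => tAct g.symm (ts r))
      (tAct g.symm vs) (fun r => (symm_mem_AutX hg i (ts r)).trans (hts r)) hvs

theorem IsExtendable.map {g : Equiv.Perm ℕ} (hg : g ∈ AutX x) :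
    ∀ {s : ℕ} {p : List ((Fin j → ℕ) × ℕ)}, IsExtendable x j s p →
      IsExtendable x j s (p.map (pairAct g))
  | 0, _, h => IsPartialPol.map hg h
  | _ + 1, _, h => fun q => by
    obtain ⟨v, hv⟩ := h (tAct g.symm q)
    refine ⟨g v, ?_⟩
    convert hv.map hg using 2
    simp [pairAct]

theorem isExtendable_map_iff {g : Equiv.Perm ℕ} (hg : g ∈ AutX x) {s : ℕ}
    {p : List ((Fin j → ℕ) × ℕ)} :
    IsExtendable x j s (p.map (pairAct g)) ↔ IsExtendable x j s p := by
  refine ⟨fun h => ?_, (·.map hg)⟩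
  simpa [List.map_map, Function.comp_def] using h.map (symm_mem_AutX hg)

theorem IsExtendable.of_polX {h : (Fin j → ℕ) → ℕ} (hh : h ∈ PolX x j) :
    ∀ {s : ℕ} {p : List ((Fin j → ℕ) × ℕ)}, (∀ e ∈ p, h e.1 = e.2) → IsExtendable x j s p
  | 0, _, hp => by
    refine ⟨fun q v v' h₁ h₂ => (hp _ h₁).symm.trans (hp _ h₂), fun i ts vs hts hvs => ?_⟩
    rw [show vs = fun m => h fun r => ts r m from funext fun m => (hp _ (hvs m)).symm]
    exact hh i ts hts
  | _ + 1, _, hp => fun q =>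
    ⟨h q, IsExtendable.of_polX hh (List.forall_mem_cons.2 ⟨rfl, hp⟩)⟩

theorem IsFullyExtendable.exists_cons (hx : OmegaCatX x) {p : List ((Fin j → ℕ) × ℕ)}
    (hp : IsFullyExtendable x j p) (q : Fin j → ℕ) :
    ∃ v, IsFullyExtendable x j ((q, v) :: p) := by
  let L : List ℕ := ((q, 0) :: p).flatMap fun e => e.2 :: List.ofFn e.1
  let B (s : ℕ) : Set ℕ := {v | IsExtendable x j s ((q, v) :: p)}
  have hinv (s : ℕ) : ∀ g ∈ AutX x, (∀ i, g (L.get i) = L.get i) → ∀ b ∈ B s, g b ∈ B s := by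
    intro g hg hfix b hb
    have hfixed : ∀ e ∈ (q, 0) :: p, pairAct g e = e := fun e he => by
      have hL : ∀ z ∈ e.2 :: List.ofFn e.1, g z = z := fun z hz => by
        have hzL : z ∈ L := List.mem_flatMap.2 ⟨e, he, hz⟩
        obtain ⟨i, rfl⟩ := List.mem_iff_get.1 hzL
        exact hfix i
      exact Prod.ext (funext fun r => hL _ (List.mem_cons_of_mem _ (List.mem_ofFn.2 ⟨r, rfl⟩)))
        (hL _ List.mem_cons_self)
    have hmap : ((q, b) :: p).map (pairAct g) = (q, g b) :: p := by
      rw [List.map_cons, List.map_congr_left (g := id) fun e he => hfixed e (.tail _ he),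
        List.map_id]
      exact congrArg (· :: p) (congrArg (·, g b) (congrArg Prod.fst (hfixed _ List.mem_cons_self)))
    simpa [B, hmap] using hb.map hg
  obtain ⟨v, hv⟩ := Oligo.iInter_nonempty hx (one_mem_AutX x) (fun i : Fin L.length => L.get i)
    (B := B) (antitone_nat_of_succ_le fun _ _ hv => IsExtendable.of_succ hv) (fun s => hp (s + 1) q)
    hinv
  exact ⟨v, fun s => Set.mem_iInter.1 hv s⟩

theorem isFullyExtendable_iff (hx : OmegaCatX x) {p : List ((Fin j → ℕ) × ℕ)} :
    IsFullyExtendable x j p ↔ ∃ h ∈ PolX x j, ∀ e ∈ p, h e.1 = e.2 := by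
  refine ⟨fun hp => ?_, fun ⟨h, hh, hp⟩ _ => IsExtendable.of_polX hh hp⟩
  -- fix values at the arguments `e 0, e 1, …` in turn
  obtain ⟨e, he⟩ := exists_surjective_nat (Fin j → ℕ)
  let P (n : ℕ) (w : Fin n → ℕ) : Prop :=
    IsFullyExtendable x j (List.ofFn (fun i => (e i, w i)) ++ p)
  have hstep (n : ℕ) (w : Fin n → ℕ) (hw : P n w) : ∃ v, P (n + 1) (Fin.snoc w v) := by
    obtain ⟨v, hv⟩ := hw.exists_cons hx (e n)
    refine ⟨v, hv.mono fun z hz => ?_⟩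
    rcases List.mem_append.1 hz with hz | hz
    · obtain ⟨i, rfl⟩ := List.mem_ofFn.1 hz
      induction i using Fin.lastCases with
      | last => simp
      | cast i =>
        exact List.mem_cons_of_mem _ (List.mem_append_left _ (List.mem_ofFn.2 ⟨i, by simp⟩))
    · exact List.mem_cons_of_mem _ (List.mem_append_right _ hz)
  obtain ⟨w, hw⟩ := exists_seq_of_forall_snoc P (by simpa [P] using hp) hstep
  let h (q : Fin j → ℕ) : ℕ := w (Function.surjInv he q)
  have hmem {q : Fin j → ℕ} {n : ℕ} (hn : Function.surjInv he q < n) :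
      (q, h q) ∈ List.ofFn (fun i : Fin n => (e i, w i)) ++ p :=
    List.mem_append_left _ (List.mem_ofFn.2 ⟨⟨_, hn⟩, by simp [h, Function.surjInv_eq]⟩)
  refine ⟨h, fun i ts hts => ?_, fun ⟨q, v⟩ hqv => ?_⟩
  · obtain ⟨n, hn⟩ := Finite.exists_le fun m => Function.surjInv he fun r => ts r m
    exact (hw (n + 1) 0).2 i ts _ hts fun m => hmem (Nat.lt_succ_of_le (hn m))
  · exact (hw _ 0).1 q _ _ (hmem (Nat.lt_succ_self _)) (List.mem_append_right _ hqv)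

end Extendable

def conjOp (θ : Equiv.Perm ℕ) {k : ℕ} (h : (Fin k → ℕ) → ℕ) : (Fin k → ℕ) → ℕ :=
  fun v => θ (h fun j => θ.symm (v j))

@[simp]
theorem conjOp_tAct (θ : Equiv.Perm ℕ) {k : ℕ} (h : (Fin k → ℕ) → ℕ) (q : Fin k → ℕ) :
    conjOp θ h (tAct θ q) = θ (h q) := by
  simp [conjOp, tAct]

theorem isFullyExtendable_map_iff_of_polX_eq (hx : OmegaCatX x) (hy : OmegaCatX y)
    {θ : Equiv.Perm ℕ} {j : ℕ} (hθ : PolX y j = conjOp θ '' PolX x j)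
    {p : List ((Fin j → ℕ) × ℕ)} :
    IsFullyExtendable y j (p.map (pairAct θ)) ↔ IsFullyExtendable x j p := by
  simp only [isFullyExtendable_iff hy, isFullyExtendable_iff hx, hθ, Set.exists_mem_image,
    List.forall_mem_map, pairAct, conjOp_tAct, EmbeddingLike.apply_eq_iff_eq]

/-- A `k`-ary partial operation on the entries of an `n`-tuple `u`, coded by index pairs: `(σ, i)`
stands for `u ∘ σ ↦ u i`. -/
abbrev Candidate (k n : ℕ) : Type := Finset ((Fin k → Fin n) × Fin n)

abbrev Profile : ℕ → ℕ → Type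
  | 0, n => Finset (Fin n × Fin n)
  | k + 1, n => Profile k n × Finset (Candidate (k + 1) n) × Finset (Profile k (n + 1))

instance instFintypeProfile : ∀ k n, Fintype (Profile k n)
  | 0, n => inferInstanceAs (Fintype (Finset (Fin n × Fin n)))
  | k + 1, n =>
    letI := instFintypeProfile k n
    letI := instFintypeProfile k (n + 1)
    inferInstance

noncomputable instance (k n : ℕ) : Encodable (Profile k n) := Fintype.toEncodable _

noncomputable def graphOn {n j : ℕ} (u : Fin n → ℕ) (t : Candidate j n) : List ((Fin j → ℕ) × ℕ) :=
  t.toList.map fun e => (fun r => u (e.1 r), u e.2)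

theorem mem_graphOn {n j : ℕ} {u : Fin n → ℕ} {t : Candidate j n} {e : (Fin j → ℕ) × ℕ} :
    e ∈ graphOn u t ↔ ∃ σ i, (σ, i) ∈ t ∧ (fun r => u (σ r), u i) = e := by
  simp [graphOn]

theorem graphOn_tAct {n j : ℕ} (g : Equiv.Perm ℕ) (u : Fin n → ℕ) (t : Candidate j n) :
    graphOn (tAct g u) t = (graphOn u t).map (pairAct g) := by
  simp only [graphOn, List.map_map]
  rfl

open Classical in
noncomputable def profile (x : Codes a) : (k : ℕ) → {n : ℕ} → (Fin n → ℕ) → Profile k n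
  | 0, _, u => Finset.univ.filter fun ij => u ij.1 = u ij.2
  | k + 1, _, u =>
    (profile x k u,
      Finset.univ.filter fun t => IsFullyExtendable x (k + 1) (graphOn u t),
      Finset.univ.filter fun c => ∃ b, profile x k (Fin.snoc u b) = c)

theorem profile_tAct {θ : Equiv.Perm ℕ}
    (hθ : ∀ j (p : List ((Fin (j + 1) → ℕ) × ℕ)),
      IsFullyExtendable y (j + 1) (p.map (pairAct θ)) ↔ IsFullyExtendable x (j + 1) p) :
    ∀ k {n} (u : Fin n → ℕ), profile y k (tAct θ u) = profile x k u
  | 0, n, u => Finset.ext fun ij => by simp [profile]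
  | k + 1, n, u => by
    have hsnoc (b : ℕ) : Fin.snoc (tAct θ u) b = tAct θ (Fin.snoc u (θ.symm b)) := by
      funext i
      induction i using Fin.lastCases <;> simp
    simp only [profile, profile_tAct hθ k]
    congr 2 <;> ext c
    · simp only [Finset.mem_filter, Finset.mem_univ, true_and, graphOn_tAct, hθ]
    · simp only [Finset.mem_filter, Finset.mem_univ, true_and, hsnoc, profile_tAct hθ k,
        θ.symm.surjective.exists (p := fun b => profile x k (Fin.snoc u b) = c)]

theorem profile_tAct_of_mem_AutX {g : Equiv.Perm ℕ} (hg : g ∈ AutX x) (k : ℕ) {n : ℕ}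
    (u : Fin n → ℕ) : profile x k (tAct g u) = profile x k u :=
  profile_tAct (fun _ _ => forall_congr' fun _ => isExtendable_map_iff hg) k u

def SameProfile (x y : Codes a) {n : ℕ} (u v : Fin n → ℕ) : Prop :=
  ∀ k, profile x k u = profile y k v

namespace SameProfile

variable {n : ℕ} {u v : Fin n → ℕ}

theorem symm (h : SameProfile x y u v) : SameProfile y x v u := fun k => (h k).symm

theorem eq_iff (h : SameProfile x y u v) (i j : Fin n) : u i = u j ↔ v i = v j := by
  simpa [profile] using congrArg (fun P : Finset (Fin n × Fin n) => (i, j) ∈ P) (h 0)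

theorem exists_snoc (hy : OmegaCatX y) (h : SameProfile x y u v) (b : ℕ) :
    ∃ c, SameProfile x y (Fin.snoc u b) (Fin.snoc v c) := by
  let C (k : ℕ) : Set ℕ := {c | profile x k (Fin.snoc u b) = profile y k (Fin.snoc v c)}
  have hne (k : ℕ) : (C k).Nonempty := by
    have hchild : profile x k (Fin.snoc u b) ∈ (profile x (k + 1) u).2.2 := by simp [profile]
    rw [h (k + 1)] at hchild
    obtain ⟨c, hc⟩ := by simpa [profile] using hchild
    exact ⟨c, hc.symm⟩
  have hinv (k : ℕ) : ∀ g ∈ AutX y, (∀ i, g (v i) = v i) → ∀ c ∈ C k, g c ∈ C k := by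
    intro g hg hfix c hc
    have hsnoc : Fin.snoc v (g c) = tAct g (Fin.snoc v c) := by
      funext i
      induction i using Fin.lastCases <;> simp [hfix]
    simpa only [C, Set.mem_ofPred_eq, hsnoc, profile_tAct_of_mem_AutX hg] using hc
  obtain ⟨c, hc⟩ := Oligo.iInter_nonempty hy (one_mem_AutX y) v (B := C)
    (antitone_nat_of_succ_le fun k c hc => congrArg Prod.fst hc) hne hinv
  exact ⟨c, Set.mem_iInter.1 hc⟩

theorem exists_snoc_left (hx : OmegaCatX x) (h : SameProfile x y u v) (c : ℕ) :
    ∃ b, SameProfile x y (Fin.snoc u b) (Fin.snoc v c) :=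
  (h.symm.exists_snoc hx c).imp fun _ hb => hb.symm

theorem exists_polX_agree (hy : OmegaCatX y) (hs : SameProfile x y u v) {j : ℕ}
    {h : (Fin (j + 1) → ℕ) → ℕ} (hh : h ∈ PolX x (j + 1)) :
    ∃ h' ∈ PolX y (j + 1), ∀ (σ : Fin (j + 1) → Fin n) (i : Fin n),
      h (fun r => u (σ r)) = u i → h' (fun r => v (σ r)) = v i := by
  classical
  -- the trace of `h` on the entries of `u` is a candidate recorded in the profile of `u`
  let t : Candidate (j + 1) n := Finset.univ.filter fun e => h (fun r => u (e.1 r)) = u e.2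
  have hx : IsFullyExtendable x (j + 1) (graphOn u t) := fun _ =>
    IsExtendable.of_polX hh fun e he => by
    obtain ⟨σ, i, hσi, rfl⟩ := mem_graphOn.1 he
    exact (Finset.mem_filter.1 hσi).2
  have hbehaviour : t ∈ (profile x (j + 1) u).2.1 := by simp [profile, hx]
  rw [hs (j + 1)] at hbehaviour
  obtain ⟨h', hh', hagree⟩ := (isFullyExtendable_iff hy).1 (by simpa [profile] using hbehaviour)
  exact ⟨h', hh', fun σ i hσi => hagree _ (mem_graphOn.2 ⟨σ, i, by simp [t, hσi], rfl⟩)⟩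

end SameProfile

theorem conjOp_mem_polX (hy : OmegaCatX y) {θ : Equiv.Perm ℕ} {A : ℕ → ℕ}
    (hA : Function.Surjective A)
    (hxy : ∀ n, SameProfile x y (fun i : Fin n => A i) (fun i => θ (A i))) {j : ℕ}
    {h : (Fin (j + 1) → ℕ) → ℕ} (hh : h ∈ PolX x (j + 1)) : conjOp θ h ∈ PolX y (j + 1) := by
  intro i ts hts
  -- all arguments `θ⁻¹ (ts r m)` and all values of `h` on them lie in an initial segment of `A`
  obtain ⟨M, σ, hσ⟩ := hA.exists_fin_lift <| Sum.elim
    (fun mr : Fin (a i) × Fin (j + 1) => θ.symm (ts mr.2 mr.1)) fun m => h fun r => θ.symm (ts r m)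
  obtain ⟨h', hh', hagree⟩ := (hxy M).exists_polX_agree hy hh
  have hcol (m : Fin (a i)) : conjOp θ h (fun r => ts r m) = h' fun r => ts r m := by
    have := hagree (fun r => σ (.inl (m, r))) (σ (.inr m)) (by simp [hσ])
    simpa [hσ, conjOp] using this.symm
  change y i (fun m => conjOp θ h fun r => ts r m) = true
  simpa only [hcol] using hh' i ts hts

theorem sameProfile_of_ppBiDef (hx : OmegaCatX x) (hy : OmegaCatX y) (h : PPBiDef x y) :
    SameProfile x y (Fin.elim0 : Fin 0 → ℕ) Fin.elim0 := by
  obtain ⟨θ, hθ⟩ := h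
  intro k
  have := profile_tAct
    (fun j _ => isFullyExtendable_map_iff_of_polX_eq hx hy (hθ (j + 1) (by omega))) k
    (Fin.elim0 : Fin 0 → ℕ)
  rwa [Subsingleton.elim (tAct θ Fin.elim0) Fin.elim0, eq_comm] at this

theorem SameProfile.ppBiDef (hx : OmegaCatX x) (hy : OmegaCatX y)
    (h : SameProfile x y (Fin.elim0 : Fin 0 → ℕ) Fin.elim0) : PPBiDef x y := by
  obtain ⟨θ, A, hA, hxy⟩ := exists_perm_of_backAndForth (fun _ u v => SameProfile x y u v) h
    (fun _ _ _ h => h.exists_snoc hy) (fun _ _ _ h => h.exists_snoc_left hx)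
    (fun _ _ _ h => h.eq_iff)
  have hyx (n : ℕ) : SameProfile y x (fun i : Fin n => θ (A i)) (fun i => θ.symm (θ (A i))) := by
    simpa using (hxy n).symm
  refine ⟨θ, fun k hk => ?_⟩
  obtain ⟨j, rfl⟩ : ∃ j, k = j + 1 := ⟨k - 1, by omega⟩
  refine subset_antisymm (fun h' hh' => ?_) ?_
  · refine ⟨conjOp θ.symm h', conjOp_mem_polX hx (θ.surjective.comp hA) hyx hh', ?_⟩
    funext v
    simp [conjOp]
  · rintro _ ⟨h, hh, rfl⟩
    exact conjOp_mem_polX hy hA hxy hh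

theorem ppBiDef_iff_sameProfile (hx : OmegaCatX x) (hy : OmegaCatX y) :
    PPBiDef x y ↔ SameProfile x y (Fin.elim0 : Fin 0 → ℕ) Fin.elim0 :=
  ⟨sameProfile_of_ppBiDef hx hy, SameProfile.ppBiDef hx hy⟩

theorem borel_XTop : @borel (Codes a) (XTop a) = MeasurableSpace.pi :=
  (BorelSpace.measurable_eq (α := Codes a)).symm

theorem measurable_isExtendable (j : ℕ) :
    ∀ s (p : List ((Fin j → ℕ) × ℕ)), Measurable fun x : Codes a => IsExtendable x j s p
  | 0, p => by
    simp only [IsExtendable, IsPartialPol]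
    fun_prop
  | s + 1, p => Measurable.forall fun _ => Measurable.exists fun _ => measurable_isExtendable j s _

theorem measurable_profile_eq :
    ∀ k {n} (u : Fin n → ℕ) (c : Profile k n), Measurable fun x : Codes a => profile x k u = c
  | 0, _, _, _ => by
    simp only [profile]
    exact measurable_const
  | k + 1, _, u, (c₁, c₂, c₃) => by
    classical
    simp only [profile, Prod.mk.injEq]
    have hext (t : Candidate (k + 1) _) :
        Measurable fun x : Codes a => IsFullyExtendable x (k + 1) (graphOn u t) :=
      Measurable.forall fun s => measurable_isExtendable _ s _
    exact (measurable_profile_eq k u c₁).and ((measurable_filter_univ_eq hext c₂).and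
      (measurable_filter_univ_eq (fun c => .exists fun b => measurable_profile_eq k _ c) c₃))

noncomputable def profileCode (x : Codes a) (k : ℕ) : ℕ :=
  Encodable.encode (profile x k (Fin.elim0 : Fin 0 → ℕ))

theorem measurable_profileCode : Measurable (profileCode : Codes a → ℕ → ℕ) := by
  refine measurable_pi_lambda _ fun k => ?_
  let _ : MeasurableSpace (Profile k 0) := ⊤
  exact measurable_from_top.comp
    (measurable_to_countable' fun c => (measurable_profile_eq k Fin.elim0 c).setOf)

theorem ppBiDef_iff_profileCode_eq (hx : OmegaCatX x) (hy : OmegaCatX y) :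
    PPBiDef x y ↔ profileCode x = profileCode y := by
  simp only [ppBiDef_iff_sameProfile hx hy, SameProfile, profileCode, funext_iff,
    Encodable.encode_inj]

end Codes

/-- pp-bi-definability is a smooth equivalence relation on the class of
ω-categorical structures: it Borel-reduces to equality on `ℝ`. -/
theorem ppBiDefinability_smooth (a : ℕ → ℕ) :
    ∃ f : Codes a → ℝ,
      @Measurable (Codes a) ℝ (@borel (Codes a) (XTop a)) Real.measurableSpace f ∧
      ∀ x y : Codes a, OmegaCatX x → OmegaCatX y → (PPBiDef x y ↔ f x = f y) := by
  obtain ⟨emb, hemb⟩ := MeasureTheory.exists_measurableEmbedding_real (ℕ → ℕ)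
  refine ⟨emb ∘ Codes.profileCode, ?_, fun x y hx hy => ?_⟩
  · rw [Codes.borel_XTop]
    exact hemb.measurable.comp Codes.measurable_profileCode
  · rw [Codes.ppBiDef_iff_profileCode_eq hx hy, Function.comp_apply, Function.comp_apply,
      hemb.injective.eq_iff]
end

section
/- Fix a countable relational language L with relation symbols R_i of arity a_i (i ∈ ℕ), and let X := ∏_{i∈ℕ} Bool^{(Fin a_i → ℕ)} be the Polish space of L-structures with domain ℕ (product topology, Bool discrete), equipped with its Borel σ-algebra. Then there exists a Borel-measurable function f: X → ℝ such that for all x, y ∈ X that are ω-categorical and without algebraicity: Aut(x) and Aut(y) are isomorphic as topological groups (equivalently, x and y are fo-bi-interpretable) if and only if f(x) = f(y). In other words, fo-bi-interpretability is smooth on the class of ω-categorical structures without algebraicity. -/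
/-- The automorphism group of the structure coded by `x`, as a subgroup of
`Equiv.Perm ℕ`. -/
def AutGX {a : ℕ → ℕ} (x : Codes a) : Subgroup (Equiv.Perm ℕ) where
  carrier := AutX x
  one_mem' := by intro i t; rfl
  mul_mem' := by
    intro g h hg hh i t
    exact (hg i (fun j => h (t j))).trans (hh i t)
  inv_mem' := by
    intro g hg i t
    have h := hg i (fun j => g⁻¹ (t j))
    have h2 : (fun j => g (g⁻¹ (t j))) = t := by
      funext j; exact g.apply_symm_apply (t j)
    rw [h2] at h
    exact h.symm

/-- The topology of pointwise convergence on the automorphism group. -/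
def autXTop {a : ℕ → ℕ} (x : Codes a) : TopologicalSpace (AutGX x) :=
  TopologicalSpace.induced (fun g : AutGX x => ((g : Equiv.Perm ℕ) : ℕ → ℕ)) (FnTop ℕ ℕ)

/-- The automorphism groups of `x` and `y` are topologically isomorphic;
for ω-categorical structures this is equivalent to fo-bi-interpretability
(Coquand, Ahlbrandt–Ziegler). -/
def FoBiInt {a : ℕ → ℕ} (x y : Codes a) : Prop :=
  ∃ φ : AutGX x ≃* AutGX y,
    @Continuous _ _ (autXTop x) (autXTop y) ⇑φ ∧
    @Continuous _ _ (autXTop y) (autXTop x) ⇑φ.symm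

/-- The structure coded by `x` is without algebraicity. -/
def NoAlgX {a : ℕ → ℕ} (x : Codes a) : Prop := NoAlg (AutX x)

/-!
The invariant of `x` is the set of finite-depth back-and-forth types of the empty tuple in the
canonical structure of `x`, whose relations are the back-and-forth equivalences `BFEquiv x` of
tuples of every length. These relations are Borel in `x` and, for ω-categorical `x`, they are the
orbits of `Aut(x)` on tuples. Only finitely many of them concern a given `m`-tuple, so the depth-`k`
types of `m`-tuples range over a finite set `TypeCode k m` and the invariant is a point of a
Cantor space, which embeds measurably into `ℝ`.

If two ω-categorical structures have the same invariant, back-and-forth (whose forth step is a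
pigeonhole over depths, using that there are finitely many orbits) gives an isomorphism of their
canonical structures, that is a permutation conjugating `Aut(x)` onto `Aut(y)`; conjugation is a
topological isomorphism. Conversely, let `φ` be a topological isomorphism of permutation groups
without algebraicity, and call `a` algebraic over `b` along `φ` if the orbit of `a` under
`φ⁻¹(Aut(y)_b)` is finite. Continuity of `φ` and `φ⁻¹` together with the absence of algebraicity
on both sides make this relation the graph of a bijection, equivariant along `φ`, so `φ` is
induced by conjugation and the invariants of `x` and `y` agree.
-/

open Set Function Topology

theorem Set.Finite.range_of_factorsThrough {α β γ : Type*} [Nonempty γ] {f : α → β}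
    {g : α → γ} (hg : g.FactorsThrough f) (hf : (range f).Finite) : (range g).Finite := by
  obtain ⟨e, rfl⟩ := (factorsThrough_iff g).1 hg
  rw [range_comp]
  exact hf.image e

theorem exists_forall_of_finite_range {ι : Type*} {p : ι → ℕ → Prop} (hp : ∀ i, Antitone (p i))
    (hfin : (range fun i => {k | p i k}).Finite) (hcover : ∀ k, ∃ i, p i k) :
    ∃ i, ∀ k, p i k := by
  obtain ⟨i, hi⟩ : ∃ i, {k | p i k}.Infinite := by
    by_contra! h
    refine infinite_univ (α := ℕ) ((hfin.sUnion (by simpa using h)).subset fun k _ => ?_)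
    obtain ⟨i, hi⟩ := hcover k
    exact mem_sUnion.2 ⟨_, mem_range_self i, hi⟩
  refine ⟨i, fun k => ?_⟩
  obtain ⟨k', hk', hkk'⟩ := hi.exists_gt k
  exact hp i hkk'.le hk'

section BackAndForth

structure IsBackAndForth (P : ∀ {m : ℕ}, (Fin m → ℕ) → (Fin m → ℕ) → Prop) : Prop where
  eq_iff_eq : ∀ {m : ℕ} {t s : Fin m → ℕ}, P t s → ∀ i j, t i = t j ↔ s i = s j
  forth : ∀ {m : ℕ} {t s : Fin m → ℕ}, P t s → ∀ p, ∃ q, P (Fin.snoc t p) (Fin.snoc s q)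
  back : ∀ {m : ℕ} {t s : Fin m → ℕ}, P t s → ∀ q, ∃ p, P (Fin.snoc t p) (Fin.snoc s q)

/-- A finite partial map `t i ↦ s i` satisfying `P`. -/
structure PartialMap (P : ∀ {m : ℕ}, (Fin m → ℕ) → (Fin m → ℕ) → Prop) where
  m : ℕ
  t : Fin m → ℕ
  s : Fin m → ℕ
  prop : P t s

namespace PartialMap

variable {P : ∀ {m : ℕ}, (Fin m → ℕ) → (Fin m → ℕ) → Prop}

instance : Preorder (PartialMap P) where
  le f f' := ∃ h : f.m ≤ f'.m, ∀ i, f'.t (Fin.castLE h i) = f.t i ∧ f'.s (Fin.castLE h i) = f.s i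
  le_refl f := ⟨le_rfl, fun i => by simp⟩
  le_trans f f' f'' := fun ⟨h, hf⟩ ⟨h', hf'⟩ =>
    ⟨h.trans h', fun i => by rw [← Fin.castLE_castLE h h', (hf' _).1, (hf' _).2]; exact hf i⟩

theorem range_t_subset {f f' : PartialMap P} (hle : f ≤ f') : range f.t ⊆ range f'.t := by
  obtain ⟨h, hf⟩ := hle
  rintro _ ⟨i, rfl⟩
  exact ⟨_, (hf i).1⟩

theorem t_eq_iff_s_eq {f f' g : PartialMap P} (H : IsBackAndForth P) (hf : f ≤ g) (hf' : f' ≤ g)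
    (i : Fin f.m) (i' : Fin f'.m) : f.t i = f'.t i' ↔ f.s i = f'.s i' := by
  obtain ⟨h, hf⟩ := hf
  obtain ⟨h', hf'⟩ := hf'
  rw [← (hf i).1, ← (hf i).2, ← (hf' i').1, ← (hf' i').2]
  exact H.eq_iff_eq g.prop _ _

/-- Extend by `p ↦ ?` and then by `? ↦ p`. -/
noncomputable def extend (H : IsBackAndForth P) (f : PartialMap P) (p : ℕ) : PartialMap P :=
  let q := (H.forth f.prop p).choose
  let p' := (H.back (H.forth f.prop p).choose_spec p).choose
  ⟨f.m + 2, Fin.snoc (Fin.snoc f.t p) p', Fin.snoc (Fin.snoc f.s q) p,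
    (H.back (H.forth f.prop p).choose_spec p).choose_spec⟩

theorem le_extend (H : IsBackAndForth P) (f : PartialMap P) (p : ℕ) : f ≤ f.extend H p :=
  ⟨Nat.le_add_right _ 2, fun _ =>
    ⟨(Fin.snoc_castSucc (α := fun _ => ℕ) _ _ _).trans (Fin.snoc_castSucc _ _ _),
      (Fin.snoc_castSucc (α := fun _ => ℕ) _ _ _).trans (Fin.snoc_castSucc _ _ _)⟩⟩

variable (H : IsBackAndForth P) (f : PartialMap P)

noncomputable def seq : ℕ → PartialMap P
  | 0 => f
  | j + 1 => (seq j).extend H j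

theorem monotone_seq : Monotone (seq H f) :=
  monotone_nat_of_le_succ fun j => le_extend H _ j

theorem le_m_seq (j : ℕ) : j ≤ (seq H f j).m := by
  induction j with
  | zero => exact Nat.zero_le _
  | succ j ih => exact (Nat.add_le_add_right ih 1).trans (Nat.le_add_right _ 1)

theorem mem_range_t_seq (v : ℕ) : v ∈ range (seq H f (v + 1)).t :=
  ⟨(Fin.last _).castSucc, (Fin.snoc_castSucc (α := fun _ => ℕ) _ _ _).trans (Fin.snoc_last _ _)⟩

theorem mem_range_s_seq (v : ℕ) : v ∈ range (seq H f (v + 1)).s :=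
  ⟨Fin.last _, Fin.snoc_last (α := fun _ => ℕ) _ _⟩

end PartialMap

open PartialMap in
theorem exists_perm_of_monotone {P : ∀ {m : ℕ}, (Fin m → ℕ) → (Fin m → ℕ) → Prop}
    (H : IsBackAndForth P) {F : ℕ → PartialMap P} (hF : Monotone F)
    (ht : ∀ v, ∃ j, v ∈ range (F j).t) (hs : ∀ v, ∃ j, v ∈ range (F j).s) :
    ∃ σ : Equiv.Perm ℕ, ∀ j i, σ ((F j).t i) = (F j).s i := by
  have key : ∀ j j' i i', (F j).t i = (F j').t i' ↔ (F j).s i = (F j').s i' := fun j j' =>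
    t_eq_iff_s_eq H (hF (le_max_left j j')) (hF (le_max_right j j'))
  choose jt it hjt using ht
  choose js is hjs using hs
  refine ⟨⟨fun v => (F (jt v)).s (it v), fun w => (F (js w)).t (is w), fun v => ?_, fun w => ?_⟩,
    fun j i => ?_⟩
  · exact ((key _ _ _ _).2 (hjs _)).trans (hjt v)
  · exact ((key _ _ _ _).1 (hjt _)).trans (hjs w)
  · exact (key _ _ _ _).1 (hjt _)

theorem IsBackAndForth.exists_perm {P : ∀ {m : ℕ}, (Fin m → ℕ) → (Fin m → ℕ) → Prop}
    (H : IsBackAndForth P) {m : ℕ} {t₀ s₀ : Fin m → ℕ} (h₀ : P t₀ s₀) :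
    ∃ σ : Equiv.Perm ℕ, ⇑σ ∘ t₀ = s₀ ∧ ∀ {n : ℕ} (t : Fin n → ℕ),
      ∃ (K : ℕ) (w : Fin K → ℕ) (u : Fin n → Fin K), n ≤ K ∧ t = w ∘ u ∧ P w (⇑σ ∘ w) := by
  set F := PartialMap.seq H ⟨m, t₀, s₀, h₀⟩
  have hF := PartialMap.monotone_seq H ⟨m, t₀, s₀, h₀⟩
  obtain ⟨σ, hσ⟩ := exists_perm_of_monotone H hF (fun v => ⟨v + 1, PartialMap.mem_range_t_seq ..⟩)
    (fun v => ⟨v + 1, PartialMap.mem_range_s_seq ..⟩)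
  refine ⟨σ, funext (hσ 0), fun {n} t => ?_⟩
  obtain ⟨M, hM⟩ := (finite_range t).bddAbove
  have hcover : ∀ i, ∃ k, (F (M + n + 1)).t k = t i := fun i =>
    PartialMap.range_t_subset (hF (by have := hM (mem_range_self i); omega))
      (PartialMap.mem_range_t_seq _ _ (t i))
  choose u hu using hcover
  have hK : M + n + 1 ≤ (F (M + n + 1)).m := PartialMap.le_m_seq ..
  refine ⟨_, _, u, by omega, funext fun i => (hu i).symm, ?_⟩
  rw [show ⇑σ ∘ (F (M + n + 1)).t = (F (M + n + 1)).s from funext (hσ _)]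
  exact (F _).prop

end BackAndForth

section PermTopology

variable {Ω : Type*}

def permTop (G : Subgroup (Equiv.Perm Ω)) : TopologicalSpace G :=
  TopologicalSpace.induced (fun g : G => ⇑(g : Equiv.Perm Ω)) (FnTop Ω Ω)

theorem continuous_perm_apply (G : Subgroup (Equiv.Perm Ω)) (a : Ω) :
    Continuous[permTop G, ⊥] fun g : G => (g : Equiv.Perm Ω) a := by
  let _ : TopologicalSpace Ω := ⊥
  let _ := permTop G
  exact (continuous_apply a).comp continuous_induced_dom

theorem isOpen_setOf_apply_eq (G : Subgroup (Equiv.Perm Ω)) (a : Ω) :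
    IsOpen[permTop G] {g : G | (g : Equiv.Perm Ω) a = a} := by
  let _ : TopologicalSpace Ω := ⊥
  have : DiscreteTopology Ω := ⟨rfl⟩
  let _ := permTop G
  exact (isOpen_discrete {a}).preimage (continuous_perm_apply G a)

theorem exists_fixing_finset_of_isOpen (G : Subgroup (Equiv.Perm Ω)) {V : Set G}
    (hV : IsOpen[permTop G] V) (h1 : 1 ∈ V) :
    ∃ s : Finset Ω, ∀ g : G, (∀ b ∈ s, (g : Equiv.Perm Ω) b = b) → g ∈ V := by
  let _ : TopologicalSpace Ω := ⊥
  obtain ⟨W, hW, rfl⟩ := isOpen_induced_iff.1 hV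
  obtain ⟨s, u, hu, hsub⟩ := isOpen_pi_iff.1 hW _ h1
  refine ⟨s, fun g hg => hsub fun b hb => ?_⟩
  show (g : Equiv.Perm Ω) b ∈ u b
  rw [hg b hb]
  exact (hu b hb).2

theorem exists_fixing_finset_of_continuous {G H : Subgroup (Equiv.Perm Ω)} (φ : G →* H)
    (hφ : Continuous[permTop G, permTop H] ⇑φ) (b : Ω) :
    ∃ s : Finset Ω, ∀ g : G, (∀ c ∈ s, (g : Equiv.Perm Ω) c = c) → (φ g : Equiv.Perm Ω) b = b := by
  let _ := permTop G
  let _ := permTop H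
  exact exists_fixing_finset_of_isOpen G ((isOpen_setOf_apply_eq H b).preimage hφ)
    (show (φ 1 : Equiv.Perm Ω) b = b by rw [map_one]; rfl)

theorem continuous_mul_mul {G H : Subgroup (Equiv.Perm Ω)} (σ τ : Equiv.Perm Ω)
    (hmem : ∀ g : G, σ * g * τ ∈ H) :
    Continuous[permTop G, permTop H] fun g : G => (⟨σ * g * τ, hmem g⟩ : H) := by
  let _ : TopologicalSpace Ω := ⊥
  have : DiscreteTopology Ω := ⟨rfl⟩
  let _ := permTop G
  exact continuous_induced_rng.2 (continuous_pi fun b =>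
    continuous_of_discreteTopology.comp (continuous_perm_apply G (τ b)))

end PermTopology

section NoAlgebraicity

variable {Ω : Type*} {G H : Subgroup (Equiv.Perm Ω)}

theorem NoAlg.mem_of_finite (hG : NoAlg (G : Set (Equiv.Perm Ω))) {s : Finset Ω} {a : Ω}
    (h : {c | ∃ g : G, (∀ b ∈ s, (g : Equiv.Perm Ω) b = b) ∧ (g : Equiv.Perm Ω) a = c}.Finite) :
    a ∈ s := by
  refine (hG s.card (fun i => (s.equivFin.symm i : Ω)) a (h.subset ?_)).elim
    fun i hi => hi ▸ (s.equivFin.symm i).2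
  rintro _ ⟨g, hg, hfix, rfl⟩
  exact ⟨⟨g, hg⟩, fun b hb => by simpa using hfix (s.equivFin ⟨b, hb⟩), rfl⟩

theorem NoAlg.eq_of_finite (hG : NoAlg (G : Set (Equiv.Perm Ω))) {p a : Ω}
    (h : {c | ∃ g : G, (g : Equiv.Perm Ω) p = p ∧ (g : Equiv.Perm Ω) a = c}.Finite) : a = p := by
  simpa using hG.mem_of_finite (s := {p}) (by simpa using h)

def AlgebraicAlong (φ : G ≃* H) (a b : Ω) : Prop :=
  {c | ∃ g : G, (φ g : Equiv.Perm Ω) b = b ∧ (g : Equiv.Perm Ω) a = c}.Finite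

variable (φ : G ≃* H)

theorem AlgebraicAlong.map {a b : Ω} (h : AlgebraicAlong φ a b) (g : G) :
    AlgebraicAlong φ ((g : Equiv.Perm Ω) a) ((φ g : Equiv.Perm Ω) b) := by
  refine (h.image g).subset ?_
  rintro _ ⟨k, hk, rfl⟩
  refine ⟨_, ⟨g⁻¹ * k * g, ?_, rfl⟩, ?_⟩
  · simp [hk]
  · simp

theorem finite_setOf_algebraicAlong (hG : NoAlg (G : Set (Equiv.Perm Ω)))
    (hφ : Continuous[permTop G, permTop H] ⇑φ) (b : Ω) : {a | AlgebraicAlong φ a b}.Finite := by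
  obtain ⟨s, hs⟩ := exists_fixing_finset_of_continuous φ.toMonoidHom hφ b
  refine s.finite_toSet.subset fun a ha => hG.mem_of_finite (ha.subset ?_)
  rintro _ ⟨g, hg, rfl⟩
  exact ⟨g, hs g hg, rfl⟩

/-- The orbit of `a` under the stabiliser of `p` lies in the finitely many finite sets
`{a' | AlgebraicAlong φ a' b'}`, `b'` in the orbit of `b` under `φ` of that stabiliser. -/
theorem AlgebraicAlong.eq_of_symm (hG : NoAlg (G : Set (Equiv.Perm Ω)))
    (hφ : Continuous[permTop G, permTop H] ⇑φ) {a b p : Ω} (h : AlgebraicAlong φ a b)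
    (hp : AlgebraicAlong φ.symm b p) : a = p := by
  have hB : {c | ∃ g : G, (g : Equiv.Perm Ω) p = p ∧ (φ g : Equiv.Perm Ω) b = c}.Finite := by
    refine hp.subset ?_
    rintro _ ⟨g, hg, rfl⟩
    exact ⟨φ g, by simpa using hg, rfl⟩
  refine hG.eq_of_finite ((hB.biUnion fun b' _ => finite_setOf_algebraicAlong φ hG hφ b').subset ?_)
  rintro _ ⟨g, hg, rfl⟩
  exact mem_biUnion ⟨g, hg, rfl⟩ (h.map φ g)

theorem exists_finset_notMem_of_not_algebraicAlong (hφ : Continuous[permTop G, permTop H] ⇑φ)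
    {a b : Ω} (h : ¬ AlgebraicAlong φ a b) :
    ∃ v : Finset Ω, a ∉ v ∧
      ∀ g : G, (∀ c ∈ v, (g : Equiv.Perm Ω) c = c) → (φ g : Equiv.Perm Ω) b = b := by
  obtain ⟨u, hu⟩ := exists_fixing_finset_of_continuous φ.toMonoidHom hφ b
  -- the orbit of `a` is infinite, so some `k` in `φ⁻¹` of the stabiliser of `b` moves `a` out of
  -- `u`, and then `k⁻¹ u` avoids `a`
  obtain ⟨_, ⟨k, hk, rfl⟩, hku⟩ := not_subset.1 (mt (Finite.subset u.finite_toSet) h)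
  refine ⟨u.map (k : Equiv.Perm Ω).symm.toEmbedding, by simpa using hku, fun g hg => ?_⟩
  have hk' : (φ k : Equiv.Perm Ω).symm b = b := by rw [Equiv.symm_apply_eq, hk]
  have hkgk : (φ (k * g * k⁻¹) : Equiv.Perm Ω) b = b :=
    hu _ fun c hc => by
      have hc' : (k : Equiv.Perm Ω).symm c ∈ u.map (k : Equiv.Perm Ω).symm.toEmbedding :=
        Finset.mem_map_equiv.2 (by simpa using hc)
      simpa [Equiv.Perm.inv_def] using congrArg (k : Equiv.Perm Ω) (hg _ hc')
  simp only [map_mul, map_inv, Subgroup.coe_mul, Subgroup.coe_inv, Equiv.Perm.mul_apply,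
    Equiv.Perm.inv_def, hk'] at hkgk
  exact (φ k : Equiv.Perm Ω).injective (hkgk.trans hk.symm)

theorem exists_algebraicAlong (hG : NoAlg (G : Set (Equiv.Perm Ω)))
    (hφ : Continuous[permTop G, permTop H] ⇑φ) (hφ' : Continuous[permTop H, permTop G] ⇑φ.symm)
    (a : Ω) : ∃ b, AlgebraicAlong φ a b := by
  classical
  obtain ⟨s, hs⟩ := exists_fixing_finset_of_continuous φ.symm.toMonoidHom hφ' a
  -- otherwise the finsets `v b` avoiding `a`, `b ∈ s`, have a joint stabiliser fixing `a`
  by_contra! hna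
  choose v hav hv using fun b => exists_finset_notMem_of_not_algebraicAlong φ hφ (hna b)
  obtain ⟨b, -, hb⟩ := Finset.mem_biUnion.1 <|
    hG.mem_of_finite (s := s.biUnion v) (a := a) <| (finite_singleton a).subset <| by
      rintro _ ⟨g, hg, rfl⟩
      simpa using hs (φ g) fun c hc => hv c g fun d hd => hg d (Finset.mem_biUnion.2 ⟨c, hc, hd⟩)
  exact hav b hb

theorem AlgebraicAlong.symm (hG : NoAlg (G : Set (Equiv.Perm Ω)))
    (hH : NoAlg (H : Set (Equiv.Perm Ω))) (hφ : Continuous[permTop G, permTop H] ⇑φ)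
    (hφ' : Continuous[permTop H, permTop G] ⇑φ.symm) {a b : Ω} (h : AlgebraicAlong φ a b) :
    AlgebraicAlong φ.symm b a := by
  obtain ⟨p, hp⟩ := exists_algebraicAlong φ.symm hH hφ' hφ b
  rwa [h.eq_of_symm φ hG hφ hp]

theorem AlgebraicAlong.unique_right (hG : NoAlg (G : Set (Equiv.Perm Ω)))
    (hH : NoAlg (H : Set (Equiv.Perm Ω))) (hφ : Continuous[permTop G, permTop H] ⇑φ)
    (hφ' : Continuous[permTop H, permTop G] ⇑φ.symm) {a b b' : Ω} (h : AlgebraicAlong φ a b)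
    (h' : AlgebraicAlong φ a b') : b' = b :=
  (h'.symm φ hG hH hφ hφ').eq_of_symm φ.symm hH hφ' h

/-- The conjugating permutation sends `a` to the unique `b` with `AlgebraicAlong φ a b`. -/
theorem exists_perm_mem_iff_conj_mem (hG : NoAlg (G : Set (Equiv.Perm Ω)))
    (hH : NoAlg (H : Set (Equiv.Perm Ω))) (hφ : Continuous[permTop G, permTop H] ⇑φ)
    (hφ' : Continuous[permTop H, permTop G] ⇑φ.symm) :
    ∃ σ : Equiv.Perm Ω, ∀ g, g ∈ G ↔ σ * g * σ⁻¹ ∈ H := by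
  choose e he using exists_algebraicAlong φ hG hφ hφ'
  have hinj : Injective e := fun c c' hcc' =>
    (he c).eq_of_symm φ hG hφ (hcc' ▸ (he c').symm φ hG hH hφ hφ')
  have hsurj : Surjective e := fun b => by
    obtain ⟨p, hp⟩ := exists_algebraicAlong φ.symm hH hφ' hφ b
    exact ⟨p, (hp.symm φ.symm hH hG hφ' hφ).unique_right φ hG hH hφ hφ' (he p)⟩
  set σ := Equiv.ofBijective e ⟨hinj, hsurj⟩
  have hconj (g : G) : (φ g : Equiv.Perm Ω) = σ * g * σ⁻¹ := Equiv.ext fun b => by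
    obtain ⟨c, rfl⟩ := σ.surjective b
    rw [Equiv.Perm.mul_apply, Equiv.Perm.mul_apply, Equiv.Perm.inv_eq_iff_eq.2 rfl]
    exact (((he c).map φ g).unique_right φ hG hH hφ hφ' (he _)).symm
  refine ⟨σ, fun g => ⟨fun hg => hconj ⟨g, hg⟩ ▸ (φ ⟨g, hg⟩).2, fun hg => ?_⟩⟩
  have hg' := hconj (φ.symm ⟨_, hg⟩)
  rw [MulEquiv.apply_symm_apply] at hg'
  rw [mul_left_cancel (mul_right_cancel hg')]
  exact (φ.symm _).2

end NoAlgebraicity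

section Codes

variable {a : ℕ → ℕ}

def QFEquiv (x : Codes a) {m : ℕ} (t s : Fin m → ℕ) : Prop :=
  (∀ i j, t i = t j ↔ s i = s j) ∧ ∀ (i : ℕ) (u : Fin (a i) → Fin m), x i (t ∘ u) = x i (s ∘ u)

/-- Equivalence in the Ehrenfeucht–Fraïssé game with `k` rounds. -/
def EFEquiv (x : Codes a) : ℕ → ∀ {m : ℕ}, (Fin m → ℕ) → (Fin m → ℕ) → Prop
  | 0, _, t, s => QFEquiv x t s
  | k + 1, _, t, s => EFEquiv x k t s ∧
      (∀ p, ∃ q, EFEquiv x k (Fin.snoc t p) (Fin.snoc s q)) ∧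
      (∀ q, ∃ p, EFEquiv x k (Fin.snoc t p) (Fin.snoc s q))

def BFEquiv (x : Codes a) {m : ℕ} (t s : Fin m → ℕ) : Prop := ∀ k, EFEquiv x k t s

variable {x : Codes a}

namespace EFEquiv

theorem symm {k m : ℕ} {t s : Fin m → ℕ} (h : EFEquiv x k t s) : EFEquiv x k s t := by
  induction k generalizing m with
  | zero => exact ⟨fun i j => (h.1 i j).symm, fun i u => (h.2 i u).symm⟩
  | succ k ih =>
    exact ⟨ih h.1, fun p => (h.2.2 p).imp fun _ => ih, fun q => (h.2.1 q).imp fun _ => ih⟩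

theorem trans {k m : ℕ} {t s w : Fin m → ℕ} (h : EFEquiv x k t s) (h' : EFEquiv x k s w) :
    EFEquiv x k t w := by
  induction k generalizing m with
  | zero => exact ⟨fun i j => (h.1 i j).trans (h'.1 i j), fun i u => (h.2 i u).trans (h'.2 i u)⟩
  | succ k ih =>
    refine ⟨ih h.1 h'.1, fun p => ?_, fun r => ?_⟩
    · obtain ⟨q, hq⟩ := h.2.1 p
      obtain ⟨r, hr⟩ := h'.2.1 q
      exact ⟨r, ih hq hr⟩
    · obtain ⟨q, hq⟩ := h'.2.2 r
      obtain ⟨p, hp⟩ := h.2.2 q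
      exact ⟨p, ih hp hq⟩

theorem antitone {m : ℕ} (t s : Fin m → ℕ) : Antitone fun k => EFEquiv x k t s :=
  antitone_nat_of_succ_le fun _ h => h.1

theorem of_mem_autX {g : Equiv.Perm ℕ} (hg : g ∈ AutX x) (k : ℕ) {m : ℕ} (t : Fin m → ℕ) :
    EFEquiv x k t (⇑g ∘ t) := by
  induction k generalizing m with
  | zero => exact ⟨fun i j => g.injective.eq_iff.symm, fun i u => (hg i (t ∘ u)).symm⟩
  | succ k ih =>
    refine ⟨ih t, fun p => ⟨g p, ?_⟩, fun q => ⟨g.symm q, ?_⟩⟩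
    · simpa [Fin.comp_snoc] using ih (Fin.snoc t p)
    · simpa [Fin.comp_snoc] using ih (Fin.snoc t (g.symm q))

end EFEquiv

namespace BFEquiv

theorem symm {m : ℕ} {t s : Fin m → ℕ} (h : BFEquiv x t s) : BFEquiv x s t := fun k => (h k).symm

theorem trans {m : ℕ} {t s w : Fin m → ℕ} (h : BFEquiv x t s) (h' : BFEquiv x s w) :
    BFEquiv x t w := fun k => (h k).trans (h' k)

theorem of_mem_autX {g : Equiv.Perm ℕ} (hg : g ∈ AutX x) {m : ℕ} (t : Fin m → ℕ) :
    BFEquiv x t (⇑g ∘ t) := fun k => EFEquiv.of_mem_autX hg k t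

end BFEquiv

theorem OmegaCatX.finite_range {γ : Type*} [Nonempty γ] (hx : OmegaCatX x) {n : ℕ}
    {F : (Fin n → ℕ) → γ} (hF : ∀ t s, BFEquiv x t s → F t = F s) : (range F).Finite := by
  refine Set.Finite.range_of_factorsThrough (f := fun t => {s | ∃ g ∈ AutX x, s = tAct g t})
    (fun t s hts => hF t s ?_) (by simpa only [eq_comm, range] using hx n)
  have hs : s ∈ {s' | ∃ g ∈ AutX x, s' = tAct g s} := ⟨1, (AutGX x).one_mem, rfl⟩
  rw [← show {s' | ∃ g ∈ AutX x, s' = tAct g t} = {s' | ∃ g ∈ AutX x, s' = tAct g s} from hts]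
    at hs
  obtain ⟨g, hg, rfl⟩ := hs
  exact BFEquiv.of_mem_autX hg t

theorem BFEquiv.exists_snoc (hx : OmegaCatX x) {m : ℕ} {t s : Fin m → ℕ} (h : BFEquiv x t s)
    (p : ℕ) : ∃ q, BFEquiv x (Fin.snoc t p) (Fin.snoc s q) := by
  -- the depths answered by `q` only depend on the orbit of `Fin.snoc s q`
  refine exists_forall_of_finite_range (fun q => EFEquiv.antitone _ _) ?_ fun k => (h (k + 1)).2.1 p
  refine (hx.finite_range (F := fun w => {k | EFEquiv x k (Fin.snoc t p) w})
    fun w w' hw => ?_).subset ?_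
  · ext k
    exact ⟨fun hk => hk.trans (hw k), fun hk => hk.trans (hw k).symm⟩
  · rintro _ ⟨q, rfl⟩
    exact ⟨_, rfl⟩

theorem isBackAndForth_bfEquiv (hx : OmegaCatX x) : IsBackAndForth (BFEquiv x) where
  eq_iff_eq h := (h 0).1
  forth h := h.exists_snoc hx
  back h q := (h.symm.exists_snoc hx q).imp fun _ hp => hp.symm

theorem bfEquiv_iff_exists_mem_autX (hx : OmegaCatX x) {m : ℕ} {t s : Fin m → ℕ} :
    BFEquiv x t s ↔ ∃ g ∈ AutX x, s = ⇑g ∘ t := by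
  refine ⟨fun h => ?_, fun ⟨g, hg, hs⟩ => hs ▸ BFEquiv.of_mem_autX hg t⟩
  obtain ⟨σ, hσt, hσ⟩ := (isBackAndForth_bfEquiv hx).exists_perm h
  refine ⟨σ, fun i t' => ?_, hσt.symm⟩
  obtain ⟨K, w, u, -, rfl, hw⟩ := hσ t'
  exact ((hw 0).2 i u).symm

end Codes

section Types

variable {a : ℕ → ℕ}

/-- Codes for depth-`k` types of `m`-tuples in the structure whose relations are the
back-and-forth equivalences: at depth `0` the equality pattern and which pairs of subtuples are
equivalent, at depth `k + 1` the depth-`k` type and the set of depth-`k` types of extensions. -/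
def TypeCode : ℕ → ℕ → Type
  | 0, m => (Fin m → Fin m → Bool) ×
      (∀ n : Fin (m + 1), (Fin n → Fin m) → (Fin n → Fin m) → Bool)
  | k + 1, m => TypeCode k m × (TypeCode k (m + 1) → Bool)

instance TypeCode.finite : ∀ k m, Finite (TypeCode k m)
  | 0, _ => inferInstanceAs (Finite (_ × _))
  | k + 1, m =>
    have := TypeCode.finite k m
    have := TypeCode.finite k (m + 1)
    inferInstanceAs (Finite (_ × _))

def HasType (x : Codes a) : ∀ (k : ℕ) {m : ℕ}, (Fin m → ℕ) → TypeCode k m → Prop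
  | 0, _, t, c => (∀ i j, c.1 i j = true ↔ t i = t j) ∧
      ∀ n u v, c.2 n u v = true ↔ BFEquiv x (t ∘ u) (t ∘ v)
  | k + 1, _, t, c => HasType x k t c.1 ∧
      (∀ p, ∃ d, c.2 d = true ∧ HasType x k (Fin.snoc t p) d) ∧
      (∀ d, c.2 d = true → ∃ p, HasType x k (Fin.snoc t p) d)

theorem exists_hasType (x : Codes a) : ∀ (k : ℕ) {m : ℕ} (t : Fin m → ℕ), ∃ c, HasType x k t c
  | 0, _, t => by
    classical
    exact ⟨(fun i j => decide (t i = t j), fun n u v => decide (BFEquiv x (t ∘ u) (t ∘ v))),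
      by simp [HasType]⟩
  | k + 1, _, t => by
    classical
    obtain ⟨c, hc⟩ := exists_hasType x k t
    choose d hd using fun p => exists_hasType x k (Fin.snoc t p)
    exact ⟨(c, fun d => decide (∃ p, HasType x k (Fin.snoc t p) d)), hc,
      fun p => ⟨d p, by simpa using ⟨p, hd p⟩, hd p⟩, fun d hd => by simpa using hd⟩

def IsBFIso (x y : Codes a) (σ : Equiv.Perm ℕ) : Prop :=
  ∀ ⦃n : ℕ⦄ (t s : Fin n → ℕ), BFEquiv x t s ↔ BFEquiv y (⇑σ ∘ t) (⇑σ ∘ s)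

variable {x y : Codes a}

theorem IsBFIso.symm {σ : Equiv.Perm ℕ} (h : IsBFIso x y σ) : IsBFIso y x σ⁻¹ := fun _ t s => by
  simpa [← Function.comp_assoc] using (h (⇑σ⁻¹ ∘ t) (⇑σ⁻¹ ∘ s)).symm

theorem isBFIso_of_mem_autX {g : Equiv.Perm ℕ} (hg : g ∈ AutX x) : IsBFIso x x g := fun _ t s =>
  ⟨fun h => (BFEquiv.of_mem_autX hg t).symm.trans (h.trans (BFEquiv.of_mem_autX hg s)),
    fun h => (BFEquiv.of_mem_autX hg t).trans (h.trans (BFEquiv.of_mem_autX hg s).symm)⟩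

theorem IsBFIso.hasType {σ : Equiv.Perm ℕ} (hσ : IsBFIso x y σ) :
    ∀ {k m : ℕ} {t : Fin m → ℕ} {c : TypeCode k m}, HasType x k t c → HasType y k (⇑σ ∘ t) c
  | 0, _, t, c, h => ⟨fun i j => (h.1 i j).trans σ.injective.eq_iff.symm,
      fun n u v => (h.2 n u v).trans (hσ _ _)⟩
  | k + 1, _, t, c, h => by
    refine ⟨hσ.hasType h.1, fun p => ?_, fun d hd => ?_⟩
    · obtain ⟨d, hd, hp⟩ := h.2.1 (σ.symm p)
      exact ⟨d, hd, by simpa [Fin.comp_snoc] using hσ.hasType hp⟩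
    · obtain ⟨p, hp⟩ := h.2.2 d hd
      exact ⟨σ p, by simpa [Fin.comp_snoc] using hσ.hasType hp⟩

theorem IsBFIso.hasType_elim0_iff {σ : Equiv.Perm ℕ} (hσ : IsBFIso x y σ) {k : ℕ}
    {c : TypeCode k 0} : HasType x k Fin.elim0 c ↔ HasType y k Fin.elim0 c := by
  have h (τ : Equiv.Perm ℕ) : ⇑τ ∘ (Fin.elim0 : Fin 0 → ℕ) = Fin.elim0 := Subsingleton.elim _ _
  exact ⟨fun hc => h σ ▸ hσ.hasType hc, fun hc => h σ⁻¹ ▸ hσ.symm.hasType hc⟩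

theorem HasType.of_bfEquiv (hx : OmegaCatX x) {k m : ℕ} {t t' : Fin m → ℕ} {c : TypeCode k m}
    (hc : HasType x k t c) (h : BFEquiv x t t') : HasType x k t' c := by
  obtain ⟨g, hg, rfl⟩ := (bfEquiv_iff_exists_mem_autX hx).1 h
  exact (isBFIso_of_mem_autX hg).hasType hc

def SameTypes (x y : Codes a) {m : ℕ} (t s : Fin m → ℕ) : Prop :=
  ∀ k, ∃ c, HasType x k t c ∧ HasType y k s c

theorem SameTypes.symm {m : ℕ} {t s : Fin m → ℕ} (h : SameTypes x y t s) : SameTypes y x s t :=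
  fun k => (h k).imp fun _ hc => hc.symm

theorem SameTypes.exists_snoc (hy : OmegaCatX y) {m : ℕ} {t s : Fin m → ℕ}
    (h : SameTypes x y t s) (p : ℕ) : ∃ q, SameTypes x y (Fin.snoc t p) (Fin.snoc s q) := by
  -- the depths answered by `q` only depend on the orbit of `Fin.snoc s q` in `y`
  refine exists_forall_of_finite_range
    (p := fun q k => ∃ d, HasType x k (Fin.snoc t p) d ∧ HasType y k (Fin.snoc s q) d)
    (fun q => antitone_nat_of_succ_le fun k ⟨d, hx, hy⟩ => ⟨d.1, hx.1, hy.1⟩) ?_ fun k => ?_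
  · refine (hy.finite_range
      (F := fun w => {k | ∃ d, HasType x k (Fin.snoc t p) d ∧ HasType y k w d})
      fun w w' hw => ?_).subset ?_
    · ext k
      exact ⟨fun ⟨d, hd, hd'⟩ => ⟨d, hd, hd'.of_bfEquiv hy hw⟩,
        fun ⟨d, hd, hd'⟩ => ⟨d, hd, hd'.of_bfEquiv hy hw.symm⟩⟩
    · rintro _ ⟨q, rfl⟩
      exact ⟨_, rfl⟩
  · obtain ⟨c, hcx, hcy⟩ := h (k + 1)
    obtain ⟨d, hd, hdx⟩ := hcx.2.1 p
    obtain ⟨q, hdy⟩ := hcy.2.2 d hd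
    exact ⟨q, d, hdx, hdy⟩

theorem isBackAndForth_sameTypes (hx : OmegaCatX x) (hy : OmegaCatX y) :
    IsBackAndForth (SameTypes x y) where
  eq_iff_eq h i j := by
    obtain ⟨c, hcx, hcy⟩ := h 0
    exact (hcx.1 i j).symm.trans (hcy.1 i j)
  forth h := h.exists_snoc hy
  back h q := (h.symm.exists_snoc hx q).imp fun _ hp => hp.symm

theorem exists_isBFIso_of_sameTypes (hx : OmegaCatX x) (hy : OmegaCatX y)
    (h : SameTypes x y Fin.elim0 Fin.elim0) : ∃ σ, IsBFIso x y σ := by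
  obtain ⟨σ, -, hσ⟩ := (isBackAndForth_sameTypes hx hy).exists_perm h
  refine ⟨σ, fun n t s => ?_⟩
  obtain ⟨K, w, u, hK, htw, hw⟩ := hσ (Fin.append t s)
  obtain ⟨c, hcx, hcy⟩ := hw 0
  have ht : t = w ∘ u ∘ Fin.castAdd n :=
    funext fun i => (Fin.append_left t s i).symm.trans (congrFun htw _)
  have hs : s = w ∘ u ∘ Fin.natAdd n :=
    funext fun i => (Fin.append_right t s i).symm.trans (congrFun htw _)
  have hn := (hcx.2 ⟨n, by omega⟩ (u ∘ Fin.castAdd n) (u ∘ Fin.natAdd n)).symm.trans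
    (hcy.2 ⟨n, by omega⟩ (u ∘ Fin.castAdd n) (u ∘ Fin.natAdd n))
  rw [ht, hs]
  exact hn

end Types

section Conjugation

variable {Ω : Type*} {G H : Subgroup (Equiv.Perm Ω)}

def conjMulEquiv (σ : Equiv.Perm Ω) (h : ∀ g, g ∈ G ↔ σ * g * σ⁻¹ ∈ H) : G ≃* H where
  toFun g := ⟨σ * g * σ⁻¹, (h g).1 g.2⟩
  invFun g := ⟨σ⁻¹ * g * σ, (h _).2 (by simp [mul_assoc])⟩
  left_inv g := Subtype.ext (by simp [mul_assoc])
  right_inv g := Subtype.ext (by simp [mul_assoc])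
  map_mul' g g' := Subtype.ext (by simp [mul_assoc])

variable {a : ℕ → ℕ} {x y : Codes a}

theorem foBiInt_iff_exists_mem_iff_conj_mem (hax : NoAlgX x) (hay : NoAlgX y) :
    FoBiInt x y ↔ ∃ σ : Equiv.Perm ℕ, ∀ g, g ∈ AutX x ↔ σ * g * σ⁻¹ ∈ AutX y :=
  ⟨fun ⟨φ, hφ, hφ'⟩ => exists_perm_mem_iff_conj_mem φ hax hay hφ hφ',
    fun ⟨σ, hσ⟩ => ⟨conjMulEquiv (G := AutGX x) (H := AutGX y) σ hσ,
      continuous_mul_mul _ _ _, continuous_mul_mul _ _ _⟩⟩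

theorem IsBFIso.conj_mem_autX {σ : Equiv.Perm ℕ} (hσ : IsBFIso x y σ) {g : Equiv.Perm ℕ}
    (hg : g ∈ AutX x) : σ * g * σ⁻¹ ∈ AutX y := fun i t => by
  simpa [Function.comp_def] using
    (((hσ _ _).1 (BFEquiv.of_mem_autX hg (⇑σ⁻¹ ∘ t)) 0).2 i id).symm

theorem IsBFIso.mem_autX_iff {σ : Equiv.Perm ℕ} (hσ : IsBFIso x y σ) (g : Equiv.Perm ℕ) :
    g ∈ AutX x ↔ σ * g * σ⁻¹ ∈ AutX y :=
  ⟨hσ.conj_mem_autX, fun h => by simpa [mul_assoc] using hσ.symm.conj_mem_autX h⟩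

theorem isBFIso_of_forall_mem_iff (hx : OmegaCatX x) (hy : OmegaCatX y) {σ : Equiv.Perm ℕ}
    (h : ∀ g, g ∈ AutX x ↔ σ * g * σ⁻¹ ∈ AutX y) : IsBFIso x y σ := fun n t s => by
  rw [bfEquiv_iff_exists_mem_autX hx, bfEquiv_iff_exists_mem_autX hy]
  constructor
  · rintro ⟨g, hg, rfl⟩
    exact ⟨σ * g * σ⁻¹, (h g).1 hg, by ext; simp⟩
  · rintro ⟨g, hg, hs⟩
    refine ⟨σ⁻¹ * g * σ, (h _).2 (by simpa [mul_assoc] using hg), funext fun i => ?_⟩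
    simpa [Equiv.eq_symm_apply] using congrFun hs i

theorem foBiInt_iff_hasType_iff (hx : OmegaCatX x) (hax : NoAlgX x) (hy : OmegaCatX y)
    (hay : NoAlgX y) :
    FoBiInt x y ↔ ∀ k (c : TypeCode k 0), HasType x k Fin.elim0 c ↔ HasType y k Fin.elim0 c := by
  rw [foBiInt_iff_exists_mem_iff_conj_mem hax hay]
  refine ⟨fun ⟨σ, hσ⟩ k c => (isBFIso_of_forall_mem_iff hx hy hσ).hasType_elim0_iff, fun h => ?_⟩
  obtain ⟨σ, hσ⟩ := exists_isBFIso_of_sameTypes hx hy fun k =>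
    (exists_hasType x k _).imp fun c hc => ⟨hc, (h k c).1 hc⟩
  exact ⟨σ, hσ.mem_autX_iff⟩

end Conjugation

section Measurability

open MeasureTheory

variable {a : ℕ → ℕ}

theorem measurable_efEquiv : ∀ (k : ℕ) {m : ℕ} (t s : Fin m → ℕ),
    Measurable fun x : Codes a => EFEquiv x k t s
  | 0, _, _, _ => measurable_const.and <| Measurable.forall fun i => Measurable.forall fun _ =>
      measurableSet_setOfPred.1 <| measurableSet_eq_fun
        ((measurable_pi_apply _).comp (measurable_pi_apply i))
        ((measurable_pi_apply _).comp (measurable_pi_apply i))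
  | k + 1, _, t, s => (measurable_efEquiv k t s).and <|
      (Measurable.forall fun _ => Measurable.exists fun _ => measurable_efEquiv k _ _).and
      (Measurable.forall fun _ => Measurable.exists fun _ => measurable_efEquiv k _ _)

theorem measurable_hasType : ∀ (k : ℕ) {m : ℕ} (t : Fin m → ℕ) (c : TypeCode k m),
    Measurable fun x : Codes a => HasType x k t c
  | 0, _, _, _ => measurable_const.and <| Measurable.forall fun _ => Measurable.forall fun _ =>
      Measurable.forall fun _ => measurable_const.iff <|
        Measurable.forall fun _ => measurable_efEquiv _ _ _
  | k + 1, _, t, c => (measurable_hasType k t c.1).and <|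
      (Measurable.forall fun _ => Measurable.exists fun _ =>
        measurable_const.and (measurable_hasType k _ _)).and
      (Measurable.forall fun _ => measurable_const.imp <|
        Measurable.exists fun _ => measurable_hasType k _ _)

open Classical in
noncomputable def typeProfile (x : Codes a) : (Σ k, TypeCode k 0) → Bool :=
  fun c => decide (HasType x c.1 Fin.elim0 c.2)

theorem typeProfile_eq_iff {x y : Codes a} : typeProfile x = typeProfile y ↔
    ∀ k (c : TypeCode k 0), HasType x k Fin.elim0 c ↔ HasType y k Fin.elim0 c := by
  simp [funext_iff, typeProfile, Sigma.forall]

theorem measurable_typeProfile : Measurable[@borel _ (XTop a)] (typeProfile (a := a)) := by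
  change Measurable[borel (Codes a)] _
  rw [← BorelSpace.measurable_eq]
  exact measurable_pi_lambda _ fun c => measurable_to_bool <| by
    simpa [preimage, typeProfile] using (measurable_hasType c.1 Fin.elim0 c.2).setOf

end Measurability

/-- fo-bi-interpretability is a smooth equivalence relation on the class of
ω-categorical structures without algebraicity. -/
theorem foBiInterpretability_smooth (a : ℕ → ℕ) :
    ∃ f : Codes a → ℝ,
      @Measurable (Codes a) ℝ (@borel (Codes a) (XTop a)) Real.measurableSpace f ∧
      ∀ x y : Codes a,
        OmegaCatX x → NoAlgX x → OmegaCatX y → NoAlgX y →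
        (FoBiInt x y ↔ f x = f y) := by
  obtain ⟨e, he⟩ := MeasureTheory.exists_measurableEmbedding_real ((Σ k, TypeCode k 0) → Bool)
  refine ⟨e ∘ typeProfile, he.measurable.comp measurable_typeProfile, fun x y hx hax hy hay => ?_⟩
  rw [Function.comp_apply, Function.comp_apply, he.injective.eq_iff, typeProfile_eq_iff]
  exact foBiInt_iff_hasType_iff hx hax hy hay
end
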